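/- arXiv:2502.13448 — 3 statements merged into one kernel-verified Lean document; each statement's English description precedes it below -/
import Mathlib

section
/- Let {P_t} be a Markov–Feller semigroup on a Polish space E. Suppose there exists z ∈ E such that {P_t} is TV-eventually continuous at z and for every ε > 0, inf_{x∈E} liminf_{t→∞} P_t(x, B(z,ε)) > 0. Then for all x₁, x₂ ∈ E, lim_{t→∞} sup_{‖f‖_∞ ≤ 1} |P_t f(x₁) − P_t f(x₂)| = 0. -/
open MeasureTheory Filter Metric Set Topology

/-- `P_t f (x) = ∫ f dP_t(x,·)`. -/
noncomputable def Pf {E : Type*} [MeasurableSpace E] (P : ℝ → E → Measure E)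
    (t : ℝ) (f : E → ℝ) (x : E) : ℝ := ∫ y, f y ∂(P t x)

/-- Total variation distance `(1/2) sup_{‖f‖_∞ ≤ 1} |∫ f dμ₁ − ∫ f dμ₂|`. -/
noncomputable def tvDist {E : Type*} [MeasurableSpace E] (μ₁ μ₂ : Measure E) : ℝ :=
  (1/2) * ⨆ f : {f : E → ℝ // Measurable f ∧ ∀ x, |f x| ≤ 1},
    |∫ x, f.1 x ∂μ₁ - ∫ x, f.1 x ∂μ₂|

/-- The Cesàro average `Q_t(x,A) = (1/t) ∫₀ᵗ P_s(x,A) ds`. -/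
noncomputable def Qavg {E : Type*} [MeasurableSpace E] (P : ℝ → E → Measure E)
    (t : ℝ) (x : E) (A : Set E) : ℝ := (∫ s in (0:ℝ)..t, (P s x A).toReal) / t

/-- `{P_t}` is eventually continuous at `z`: for every bounded Lipschitz `f`,
`limsup_{x→z} limsup_{t→∞} |P_t f(x) − P_t f(z)| = 0`. -/
def EventuallyContinuousAt {E : Type*} [MetricSpace E] [MeasurableSpace E]
    (P : ℝ → E → Measure E) (z : E) : Prop :=
  ∀ f : E → ℝ, (∃ K, LipschitzWith K f) → (∃ C, ∀ x, |f x| ≤ C) →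
    limsup (fun x => limsup (fun t => |Pf P t f x - Pf P t f z|) atTop) (𝓝 z) = 0

/-- `{P_t}` is TV-eventually continuous at `z`:
`limsup_{x→z} limsup_{t→∞} sup_{‖f‖_∞ ≤ 1} |P_t f(x) − P_t f(z)| = 0`. -/
def TVEventuallyContinuousAt {E : Type*} [MetricSpace E] [MeasurableSpace E]
    (P : ℝ → E → Measure E) (z : E) : Prop :=
  limsup (fun x =>
    limsup (fun t => ⨆ f : {f : E → ℝ // Measurable f ∧ ∀ y, |f y| ≤ 1},
      |Pf P t f.1 x - Pf P t f.1 z|) atTop) (𝓝 z) = 0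
/-!
For initial laws `μ, ν` the distance `tvDist (μ P_t) (ν P_t)` is non-increasing in `t`, so it
converges; let `Θ` be the supremum of these limits over all pairs of initial laws. Given `α > 0`,
TV-eventual continuity yields a ball `B` around `z` whose points `y` satisfy
`tvDist (P_t y) (P_t z) < α` for large `t`, and the uniform lower bound yields `β ∈ (0, 1)` such
that every law gives `B` mass at least `β` after a long enough time. Splitting both evolved laws as
`β ν_i + (1 - β) ρ_i` with `ν_i` concentrated on `B`, the `ν_i`-parts eventually merge up to `4α`,
while the `ρ_i`-parts contribute at most `(1 - β) Θ`. Hence `Θ ≤ 4αβ + (1 - β) Θ`, so `Θ ≤ 4α`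
for every `α > 0`, and `Θ = 0`.
-/

open ProbabilityTheory
open scoped ENNReal

lemma AntitoneOn.tendsto_atTop_iInf_Ici {f : ℝ → ℝ} {a : ℝ} (hf : AntitoneOn f (Ici a))
    (hbdd : BddBelow (f '' Ici a)) : Tendsto f atTop (𝓝 (⨅ t : Ici a, f t)) := by
  have hsub : Tendsto (fun t : Ici a => f t) atTop (𝓝 (⨅ t : Ici a, f t)) :=
    tendsto_atTop_ciInf (fun s t hst => hf s.2 t.2 hst) (by rwa [← image_eq_range])
  have hmax : Tendsto (fun x : ℝ => (⟨max a x, le_max_left a x⟩ : Ici a)) atTop atTop :=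
    tendsto_Ici_atTop.2 (tendsto_atTop_atTop_of_monotone (fun _ _ h => max_le_max_left a h)
      fun b => ⟨b, le_max_right a b⟩)
  exact (hsub.comp hmax).congr' <| (eventually_ge_atTop a).mono fun x hx => by
    simp [max_eq_right hx]

lemma eventually_eventually_lt_of_limsup_limsup_eq_zero {X ι : Type*} {l : Filter X}
    {l' : Filter ι} [l'.NeBot] {u : X → ι → ℝ} {C : ℝ} (h0 : ∀ x i, 0 ≤ u x i)
    (hC : ∀ x i, u x i ≤ C) (h : limsup (fun x => limsup (u x) l') l = 0) {ε : ℝ} (hε : 0 < ε) :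
    ∀ᶠ x in l, ∀ᶠ i in l', u x i < ε := by
  have hbdd : IsBoundedUnder (· ≤ ·) l fun x => limsup (u x) l' :=
    isBoundedUnder_of ⟨C, fun x =>
      limsup_le_of_le (isCoboundedUnder_le_of_le l' (h0 x)) (.of_forall (hC x))⟩
  exact (eventually_lt_of_limsup_lt (h ▸ hε) hbdd).mono fun x hx =>
    eventually_lt_of_limsup_lt hx (isBoundedUnder_of ⟨C, hC x⟩)

lemma ENNReal.ofReal_le_liminf_of_lt_liminf_toReal {ι : Type*} {l : Filter ι} {u : ι → ℝ≥0∞}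
    {c : ℝ} (hc : c < liminf (fun i => (u i).toReal) l) : ENNReal.ofReal c ≤ liminf u l :=
  le_liminf_of_le (by isBoundedDefault) <|
    (eventually_lt_of_lt_liminf hc (isBoundedUnder_of ⟨0, fun _ => ENNReal.toReal_nonneg⟩)).mono
      fun _ hi => ENNReal.ofReal_le_of_le_toReal hi.le

lemma MeasureTheory.Measure.integral_comp {E F G : Type*} [MeasurableSpace E]
    [MeasurableSpace F] [NormedAddCommGroup G] [NormedSpace ℝ G] {μ : Measure E}
    {κ : Kernel E F} [IsFiniteKernel κ] {f : F → G} (hf : Integrable f (κ ∘ₘ μ)) :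
    ∫ y, f y ∂(κ ∘ₘ μ) = ∫ x, ∫ y, f y ∂κ x ∂μ := by
  rw [comp_eq_comp_const_apply] at hf ⊢
  rw [Kernel.integral_comp hf]
  simp

section TotalVariation

variable {E F : Type*} [MeasurableSpace E] [MeasurableSpace F] {μ ν ξ : Measure E}
  {f : E → ℝ}

lemma abs_integral_le_measureReal_univ [IsFiniteMeasure μ] (hf : ∀ x, |f x| ≤ 1) :
    |∫ x, f x ∂μ| ≤ μ.real univ := by
  simpa using norm_integral_le_of_norm_le_const (μ := μ) (f := f) (C := 1) (.of_forall hf)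

lemma abs_integral_le_one [IsProbabilityMeasure μ] (hf : ∀ x, |f x| ≤ 1) :
    |∫ x, f x ∂μ| ≤ 1 :=
  (abs_integral_le_measureReal_univ hf).trans_eq probReal_univ

lemma integrable_of_abs_le_one [IsFiniteMeasure μ] (hf : Measurable f) (hf1 : ∀ x, |f x| ≤ 1) :
    Integrable f μ :=
  .of_bound hf.aestronglyMeasurable 1 (.of_forall hf1)

variable (μ ν) in
lemma bddAbove_range_abs_integral_sub [IsFiniteMeasure μ] [IsFiniteMeasure ν] :
    BddAbove (range fun f : {f : E → ℝ // Measurable f ∧ ∀ x, |f x| ≤ 1} =>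
      |∫ x, f.1 x ∂μ - ∫ x, f.1 x ∂ν|) := by
  refine ⟨μ.real univ + ν.real univ, ?_⟩
  rintro _ ⟨f, rfl⟩
  exact (abs_sub _ _).trans <| add_le_add (abs_integral_le_measureReal_univ f.2.2)
    (abs_integral_le_measureReal_univ f.2.2)

lemma abs_integral_sub_le_two_mul_tvDist [IsFiniteMeasure μ] [IsFiniteMeasure ν]
    (hf : Measurable f) (hf1 : ∀ x, |f x| ≤ 1) :
    |∫ x, f x ∂μ - ∫ x, f x ∂ν| ≤ 2 * tvDist μ ν := by
  have := le_ciSup (bddAbove_range_abs_integral_sub μ ν) ⟨f, hf, hf1⟩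
  rw [tvDist]
  linarith

lemma tvDist_le_of_forall {c : ℝ}
    (h : ∀ f : E → ℝ, Measurable f → (∀ x, |f x| ≤ 1) → |∫ x, f x ∂μ - ∫ x, f x ∂ν| ≤ 2 * c) :
    tvDist μ ν ≤ c := by
  have : Nonempty {f : E → ℝ // Measurable f ∧ ∀ x, |f x| ≤ 1} :=
    ⟨⟨0, measurable_const, by simp⟩⟩
  have := ciSup_le fun f : {f : E → ℝ // Measurable f ∧ ∀ x, |f x| ≤ 1} => h f.1 f.2.1 f.2.2
  rw [tvDist]
  linarith

lemma tvDist_nonneg [IsFiniteMeasure μ] [IsFiniteMeasure ν] : 0 ≤ tvDist μ ν := by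
  have := abs_integral_sub_le_two_mul_tvDist (μ := μ) (ν := ν) measurable_const
    (f := fun _ => 0) (by simp)
  linarith [abs_nonneg (∫ _, (0 : ℝ) ∂μ - ∫ _, (0 : ℝ) ∂ν)]

lemma tvDist_le_one [IsProbabilityMeasure μ] [IsProbabilityMeasure ν] : tvDist μ ν ≤ 1 :=
  tvDist_le_of_forall fun _ _ hf1 => (abs_sub _ _).trans <| by
    linarith [abs_integral_le_one (μ := μ) hf1, abs_integral_le_one (μ := ν) hf1]

lemma tvDist_comm : tvDist μ ν = tvDist ν μ := by
  simp only [tvDist, abs_sub_comm]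

lemma tvDist_triangle [IsFiniteMeasure μ] [IsFiniteMeasure ν] [IsFiniteMeasure ξ] :
    tvDist μ ν ≤ tvDist μ ξ + tvDist ξ ν :=
  tvDist_le_of_forall fun _ hf hf1 => (abs_sub_le _ _ _).trans <| by
    linarith [abs_integral_sub_le_two_mul_tvDist (μ := μ) (ν := ξ) hf hf1,
      abs_integral_sub_le_two_mul_tvDist (μ := ξ) (ν := ν) hf hf1]

lemma tvDist_smul_add_smul_le {μ₁ μ₂ ν₁ ν₂ : Measure E} [IsFiniteMeasure μ₁]
    [IsFiniteMeasure μ₂] [IsFiniteMeasure ν₁] [IsFiniteMeasure ν₂] {a b : ℝ≥0∞} (ha : a ≠ ∞)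
    (hb : b ≠ ∞) :
    tvDist (a • μ₁ + b • ν₁) (a • μ₂ + b • ν₂)
      ≤ a.toReal * tvDist μ₁ μ₂ + b.toReal * tvDist ν₁ ν₂ := by
  refine tvDist_le_of_forall fun f hf hf1 => ?_
  have hint {ρ : Measure E} [IsFiniteMeasure ρ] {c : ℝ≥0∞} (hc : c ≠ ∞) : Integrable f (c • ρ) :=
    (integrable_of_abs_le_one hf hf1).smul_measure hc
  rw [integral_add_measure (hint ha) (hint hb), integral_add_measure (hint ha) (hint hb)]
  simp only [integral_smul_measure, smul_eq_mul]
  calc _ = |a.toReal * (∫ x, f x ∂μ₁ - ∫ x, f x ∂μ₂)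
          + b.toReal * (∫ x, f x ∂ν₁ - ∫ x, f x ∂ν₂)| := by
        ring_nf
    _ ≤ a.toReal * |∫ x, f x ∂μ₁ - ∫ x, f x ∂μ₂|
          + b.toReal * |∫ x, f x ∂ν₁ - ∫ x, f x ∂ν₂| := by
        refine (abs_add_le _ _).trans_eq ?_
        simp only [abs_mul, ENNReal.abs_toReal]
    _ ≤ a.toReal * (2 * tvDist μ₁ μ₂) + b.toReal * (2 * tvDist ν₁ ν₂) := by
        gcongr <;> exact abs_integral_sub_le_two_mul_tvDist hf hf1
    _ = 2 * (a.toReal * tvDist μ₁ μ₂ + b.toReal * tvDist ν₁ ν₂) := by ring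

lemma tvDist_comp_le (κ : Kernel E F) [IsMarkovKernel κ] [IsFiniteMeasure μ] [IsFiniteMeasure ν] :
    tvDist (κ ∘ₘ μ) (κ ∘ₘ ν) ≤ tvDist μ ν := by
  refine tvDist_le_of_forall fun f hf hf1 => ?_
  rw [Measure.integral_comp (integrable_of_abs_le_one hf hf1),
    Measure.integral_comp (integrable_of_abs_le_one hf hf1)]
  exact abs_integral_sub_le_two_mul_tvDist (hf.stronglyMeasurable.integral_kernel).measurable
    fun x => abs_integral_le_one hf1

/-- Stated with `1 - ν.real A` rather than `ν.real Aᶜ`: the two differ when `A` is not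
measurable. -/
lemma tvDist_comp_le_add_one_sub (η : Kernel E F) [IsMarkovKernel η] [IsProbabilityMeasure ν]
    (ξ : Measure F) [IsProbabilityMeasure ξ] {A : Set E} {α : ℝ} (hα : 0 ≤ α)
    (hA : ∀ y ∈ A, tvDist (η y) ξ ≤ α) :
    tvDist (η ∘ₘ ν) ξ ≤ α + (1 - ν.real A) := by
  refine tvDist_le_of_forall fun f hf hf1 => ?_
  set g : E → ℝ := fun y => ∫ x, f x ∂η y
  set c := ∫ x, f x ∂ξ
  have hg : Measurable g := hf.stronglyMeasurable.integral_kernel.measurable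
  have hgc (y : E) : |g y - c| ≤ 2 * tvDist (η y) ξ := abs_integral_sub_le_two_mul_tvDist hf hf1
  set M := {y | |g y - c| ≤ 2 * α}
  have hM : MeasurableSet M := measurableSet_le (by fun_prop) measurable_const
  have hAM : A ⊆ M := fun y hy => (hgc y).trans (by linarith [hA y hy])
  have hbound (y : E) : |g y - c| ≤ 2 * α + Mᶜ.indicator (fun _ => 2) y := by
    by_cases hy : y ∈ M
    · rw [indicator_of_notMem (not_not_intro hy), add_zero]
      exact hy
    · rw [indicator_of_mem hy]
      linarith [hgc y, tvDist_le_one (μ := η y) (ν := ξ)]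
  have hgint : Integrable g ν := integrable_of_abs_le_one hg fun y => abs_integral_le_one hf1
  have hind : Integrable (Mᶜ.indicator fun _ => (2 : ℝ)) ν :=
    (integrable_const _).indicator hM.compl
  calc |∫ x, f x ∂(η ∘ₘ ν) - c| = |∫ y, (g y - c) ∂ν| := by
        rw [Measure.integral_comp (integrable_of_abs_le_one hf hf1),
          integral_sub hgint (integrable_const c), integral_const, probReal_univ, one_smul]
    _ ≤ ∫ y, |g y - c| ∂ν := abs_integral_le_integral_abs
    _ ≤ ∫ y, (2 * α + Mᶜ.indicator (fun _ => 2) y) ∂ν :=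
        integral_mono (hgint.sub (integrable_const c)).abs ((integrable_const _).add hind) hbound
    _ = 2 * α + 2 * ν.real Mᶜ := by
        rw [integral_add (integrable_const _) hind, integral_const,
          integral_indicator_const _ hM.compl]
        simp [mul_comm]
    _ ≤ 2 * (α + (1 - ν.real A)) := by
        rw [probReal_compl_eq_one_sub hM]
        linarith [measureReal_mono (μ := ν) hAM]

end TotalVariation

section Mixture

variable {E : Type*} [MeasurableSpace E]

lemma exists_eq_smul_add_smul_of_smul_le {μ ν : Measure E} [IsProbabilityMeasure μ]
    [IsProbabilityMeasure ν] {β : ℝ} (hβ0 : 0 ≤ β) (hβ1 : β < 1)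
    (hle : ENNReal.ofReal β • ν ≤ μ) :
    ∃ ρ : Measure E, IsProbabilityMeasure ρ ∧
      μ = ENNReal.ofReal β • ν + ENNReal.ofReal (1 - β) • ρ := by
  have := ν.smul_finite (c := ENNReal.ofReal β) ENNReal.ofReal_ne_top
  have hpos : ENNReal.ofReal (1 - β) ≠ 0 := (ENNReal.ofReal_pos.2 (by linarith)).ne'
  have hrest : (μ - ENNReal.ofReal β • ν) univ = ENNReal.ofReal (1 - β) := by
    rw [Measure.sub_apply .univ hle, Measure.smul_apply, measure_univ, measure_univ, smul_eq_mul,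
      mul_one, ENNReal.ofReal_sub 1 hβ0, ENNReal.ofReal_one]
  refine ⟨(ENNReal.ofReal (1 - β))⁻¹ • (μ - ENNReal.ofReal β • ν), ⟨?_⟩, ?_⟩
  · rw [Measure.smul_apply, hrest, smul_eq_mul, ENNReal.inv_mul_cancel hpos ENNReal.ofReal_ne_top]
  · rw [smul_smul, ENNReal.mul_inv_cancel hpos ENNReal.ofReal_ne_top, one_smul, add_comm,
      Measure.sub_add_cancel_of_le hle]

lemma exists_eq_smul_add_smul_of_le_apply {μ : Measure E} [IsProbabilityMeasure μ] {B : Set E}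
    {β : ℝ} (hβ0 : 0 < β) (hβ1 : β < 1) (hB : ENNReal.ofReal β ≤ μ B) :
    ∃ ν ρ : Measure E, IsProbabilityMeasure ν ∧ IsProbabilityMeasure ρ ∧ ν B = 1 ∧
      μ = ENNReal.ofReal β • ν + ENNReal.ofReal (1 - β) • ρ := by
  have hB0 : μ B ≠ 0 := ((ENNReal.ofReal_pos.2 hβ0).trans_le hB).ne'
  have hνB : ((μ B)⁻¹ • μ.restrict B) B = 1 := by
    rw [Measure.smul_apply, Measure.restrict_apply_self, smul_eq_mul,
      ENNReal.inv_mul_cancel hB0 (measure_ne_top μ B)]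
  have : IsProbabilityMeasure ((μ B)⁻¹ • μ.restrict B) := ⟨by
    rw [Measure.smul_apply, Measure.restrict_apply_univ, smul_eq_mul,
      ENNReal.inv_mul_cancel hB0 (measure_ne_top μ B)]⟩
  have hle : ENNReal.ofReal β • (μ B)⁻¹ • μ.restrict B ≤ μ :=
    calc ENNReal.ofReal β • (μ B)⁻¹ • μ.restrict B ≤ μ B • (μ B)⁻¹ • μ.restrict B := by gcongr
      _ = μ.restrict B := by
        rw [smul_smul, ENNReal.mul_inv_cancel hB0 (measure_ne_top μ B), one_smul]
      _ ≤ μ := Measure.restrict_le_self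
  obtain ⟨ρ, hρ, hμ⟩ := exists_eq_smul_add_smul_of_smul_le hβ0.le hβ1 hle
  exact ⟨_, ρ, this, hρ, hνB, hμ⟩

end Mixture

section Hitting

variable {E F ι : Type*} [MeasurableSpace E] [MeasurableSpace F] {l : Filter ι}
  [l.IsCountablyGenerated]

lemma le_liminf_comp_apply (κ : ι → Kernel E F) {B : Set F} (hB : MeasurableSet B) {c : ℝ≥0∞}
    (hc : ∀ x, c ≤ liminf (fun i => κ i x B) l) (μ : Measure E) [IsProbabilityMeasure μ] :
    c ≤ liminf (fun i => (κ i ∘ₘ μ) B) l := by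
  simp_rw [Measure.bind_apply hB (κ _).aemeasurable]
  calc c = ∫⁻ _, c ∂μ := by simp
    _ ≤ ∫⁻ x, liminf (fun i => κ i x B) l ∂μ := lintegral_mono hc
    _ ≤ _ := lintegral_liminf_le fun i => (κ i).measurable_coe hB

lemma exists_eventually_le_comp_apply {κ : ι → Kernel E F} {B : Set F} (hB : MeasurableSet B)
    (hpos : 0 < ⨅ x, liminf (fun i => (κ i x B).toReal) l) :
    ∃ β : ℝ, 0 < β ∧ β < 1 ∧ ∀ μ : Measure E, IsProbabilityMeasure μ →
      ∀ᶠ i in l, ENNReal.ofReal β ≤ (κ i ∘ₘ μ) B := by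
  set c := ⨅ x, liminf (fun i => (κ i x B).toReal) l
  -- `⨅` of a real family that is not bounded below is `0`
  have hbdd : BddBelow (range fun x => liminf (fun i => (κ i x B).toReal) l) := by
    by_contra h
    exact hpos.ne' (Real.iInf_of_not_bddBelow h)
  have hc : 0 < min c 1 := lt_min hpos one_pos
  refine ⟨min c 1 / 3, by positivity, by linarith [min_le_right c 1], fun μ _ => ?_⟩
  have h2β (x : E) : ENNReal.ofReal (2 * (min c 1 / 3)) ≤ liminf (fun i => κ i x B) l :=
    ENNReal.ofReal_le_liminf_of_lt_liminf_toReal <|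
      (by linarith [min_le_left c 1] : 2 * (min c 1 / 3) < c).trans_le (ciInf_le hbdd x)
  have hlt : ENNReal.ofReal (min c 1 / 3) < ENNReal.ofReal (2 * (min c 1 / 3)) :=
    (ENNReal.ofReal_lt_ofReal_iff (by positivity)).2 (by linarith)
  exact (eventually_lt_of_lt_liminf (hlt.trans_le (le_liminf_comp_apply κ hB h2β μ))).mono
    fun _ => le_of_lt

end Hitting

section Semigroup

variable {E : Type*} [MeasurableSpace E] {κ : ℝ → Kernel E E}

lemma comp_add_eq_comp_comp (hκ : ∀ s t, 0 ≤ s → 0 ≤ t → κ (s + t) = κ t ∘ₖ κ s) {s t : ℝ}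
    (hs : 0 ≤ s) (ht : 0 ≤ t) (μ : Measure E) : κ (s + t) ∘ₘ μ = κ t ∘ₘ (κ s ∘ₘ μ) := by
  rw [hκ s t hs ht, Measure.comp_assoc]

lemma tvDist_comp_dirac (t : ℝ) (x y : E) :
    tvDist (κ t ∘ₘ .dirac x) (κ t ∘ₘ .dirac y) = tvDist (κ t x) (κ t y) := by
  rw [Measure.dirac_bind (κ t).measurable, Measure.dirac_bind (κ t).measurable]

variable [∀ t, IsMarkovKernel (κ t)]

lemma antitoneOn_tvDist_comp (hκ : ∀ s t, 0 ≤ s → 0 ≤ t → κ (s + t) = κ t ∘ₖ κ s)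
    (μ ν : Measure E) [IsFiniteMeasure μ] [IsFiniteMeasure ν] :
    AntitoneOn (fun t => tvDist (κ t ∘ₘ μ) (κ t ∘ₘ ν)) (Ici 0) := by
  intro s hs t _ hst
  obtain ⟨r, hr, rfl⟩ : ∃ r, 0 ≤ r ∧ t = s + r := ⟨t - s, by linarith, by ring⟩
  simp only [comp_add_eq_comp_comp hκ hs hr]
  exact tvDist_comp_le _

variable (κ) in
noncomputable def asymptoticTVDist (μ ν : Measure E) : ℝ :=
  ⨅ t : Ici (0 : ℝ), tvDist (κ t ∘ₘ μ) (κ t ∘ₘ ν)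

lemma bddBelow_tvDist_comp (μ ν : Measure E) [IsFiniteMeasure μ] [IsFiniteMeasure ν]
    (s : Set ℝ) : BddBelow ((fun t => tvDist (κ t ∘ₘ μ) (κ t ∘ₘ ν)) '' s) :=
  ⟨0, by rintro _ ⟨t, -, rfl⟩; exact tvDist_nonneg⟩

lemma asymptoticTVDist_nonneg (μ ν : Measure E) [IsFiniteMeasure μ] [IsFiniteMeasure ν] :
    0 ≤ asymptoticTVDist κ μ ν :=
  le_ciInf fun _ => tvDist_nonneg

lemma asymptoticTVDist_le_tvDist (μ ν : Measure E) [IsFiniteMeasure μ] [IsFiniteMeasure ν]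
    {t : ℝ} (ht : 0 ≤ t) : asymptoticTVDist κ μ ν ≤ tvDist (κ t ∘ₘ μ) (κ t ∘ₘ ν) := by
  refine ciInf_le ?_ (⟨t, ht⟩ : Ici (0 : ℝ))
  simpa only [image_eq_range] using bddBelow_tvDist_comp (κ := κ) μ ν (Ici 0)

lemma tendsto_tvDist_comp_asymptoticTVDist
    (hκ : ∀ s t, 0 ≤ s → 0 ≤ t → κ (s + t) = κ t ∘ₖ κ s)
    (μ ν : Measure E) [IsFiniteMeasure μ] [IsFiniteMeasure ν] :
    Tendsto (fun t => tvDist (κ t ∘ₘ μ) (κ t ∘ₘ ν)) atTop (𝓝 (asymptoticTVDist κ μ ν)) :=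
  (antitoneOn_tvDist_comp hκ μ ν).tendsto_atTop_iInf_Ici (bddBelow_tvDist_comp μ ν _)

lemma eventually_tvDist_comp_lt (hκ : ∀ s t, 0 ≤ s → 0 ≤ t → κ (s + t) = κ t ∘ₖ κ s)
    {ν : Measure E} [IsProbabilityMeasure ν] {B : Set E} (hνB : ν B = 1) {z : E} {α ε : ℝ}
    (hα : 0 ≤ α) (hε : 0 < ε) (hB : ∀ y ∈ B, ∀ᶠ s in atTop, tvDist (κ s y) (κ s z) < α) :
    ∀ᶠ s in atTop, tvDist (κ s ∘ₘ ν) (κ s z) < α + ε := by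
  let A : ℕ → Set E := fun n => {y ∈ B | tvDist (κ n y) (κ n z) < α}
  have hA : Monotone A := fun m n hmn y hy => ⟨hy.1, lt_of_le_of_lt (by
      rw [← tvDist_comp_dirac, ← tvDist_comp_dirac]
      exact antitoneOn_tvDist_comp hκ _ _ (mem_Ici.2 m.cast_nonneg) (mem_Ici.2 n.cast_nonneg)
        (Nat.cast_le.2 hmn)) hy.2⟩
  have hAB : ⋃ n, A n = B := by
    refine Subset.antisymm (iUnion_subset fun n => sep_subset _ _) fun y hy => ?_
    obtain ⟨n, hn⟩ := (tendsto_natCast_atTop_atTop.eventually (hB y hy)).exists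
    exact mem_iUnion.2 ⟨n, hy, hn⟩
  -- continuity from below holds for arbitrary, possibly non-measurable, sets
  have hlim : Tendsto (fun n => ν.real (A n)) atTop (𝓝 1) := by
    have := tendsto_measure_iUnion_atTop (μ := ν) hA
    rw [hAB, hνB] at this
    exact (ENNReal.tendsto_toReal ENNReal.one_ne_top).comp this
  obtain ⟨n, hn⟩ := (hlim.eventually (lt_mem_nhds (by linarith : 1 - ε < 1))).exists
  filter_upwards [eventually_ge_atTop (n : ℝ)] with s hs
  calc tvDist (κ s ∘ₘ ν) (κ s z) = tvDist (κ s ∘ₘ ν) (κ s ∘ₘ .dirac z) := by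
        rw [Measure.dirac_bind (κ s).measurable]
    _ ≤ tvDist (κ n ∘ₘ ν) (κ n ∘ₘ .dirac z) :=
        antitoneOn_tvDist_comp hκ _ _ (mem_Ici.2 n.cast_nonneg)
          (mem_Ici.2 (n.cast_nonneg.trans hs)) hs
    _ ≤ α + (1 - ν.real (A n)) := by
        rw [Measure.dirac_bind (κ n).measurable]
        exact tvDist_comp_le_add_one_sub (κ n) (κ n z) hα fun y hy => hy.2.le
    _ < α + ε := by linarith

lemma asymptoticTVDist_le_mul_add_mul (hκ : ∀ s t, 0 ≤ s → 0 ≤ t → κ (s + t) = κ t ∘ₖ κ s)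
    {B : Set E} {β : ℝ} (hβ0 : 0 < β) (hβ1 : β < 1)
    (hhit : ∀ μ : Measure E, IsProbabilityMeasure μ →
      ∀ᶠ t in atTop, ENNReal.ofReal β ≤ (κ t ∘ₘ μ) B)
    {z : E} {α : ℝ} (hα : 0 < α) (hB : ∀ y ∈ B, ∀ᶠ s in atTop, tvDist (κ s y) (κ s z) < α)
    {Θ : ℝ} (hΘ : ∀ ρ₁ ρ₂ : Measure E, IsProbabilityMeasure ρ₁ → IsProbabilityMeasure ρ₂ →
      asymptoticTVDist κ ρ₁ ρ₂ ≤ Θ)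
    (μ₁ μ₂ : Measure E) [IsProbabilityMeasure μ₁] [IsProbabilityMeasure μ₂] :
    asymptoticTVDist κ μ₁ μ₂ ≤ β * (4 * α) + (1 - β) * Θ := by
  obtain ⟨t, ⟨h₁, h₂⟩, ht⟩ :=
    (((hhit μ₁ ‹_›).and (hhit μ₂ ‹_›)).and (eventually_ge_atTop 0)).exists
  obtain ⟨ν₁, ρ₁, _, _, hν₁, hμ₁⟩ := exists_eq_smul_add_smul_of_le_apply hβ0 hβ1 h₁
  obtain ⟨ν₂, ρ₂, _, _, hν₂, hμ₂⟩ := exists_eq_smul_add_smul_of_le_apply hβ0 hβ1 h₂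
  have hstep : ∀ᶠ s in atTop, asymptoticTVDist κ μ₁ μ₂
      ≤ β * (4 * α) + (1 - β) * tvDist (κ s ∘ₘ ρ₁) (κ s ∘ₘ ρ₂) := by
    filter_upwards [eventually_tvDist_comp_lt hκ hν₁ hα.le hα hB,
      eventually_tvDist_comp_lt hκ hν₂ hα.le hα hB, eventually_ge_atTop 0] with s hs₁ hs₂ hs
    have hν : tvDist (κ s ∘ₘ ν₁) (κ s ∘ₘ ν₂) ≤ 4 * α := by
      linarith [tvDist_triangle (μ := κ s ∘ₘ ν₁) (ξ := κ s z) (ν := κ s ∘ₘ ν₂),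
        tvDist_comm (μ := κ s z) (ν := κ s ∘ₘ ν₂)]
    calc asymptoticTVDist κ μ₁ μ₂ ≤ tvDist (κ (t + s) ∘ₘ μ₁) (κ (t + s) ∘ₘ μ₂) :=
          asymptoticTVDist_le_tvDist _ _ (by linarith)
      _ ≤ β * tvDist (κ s ∘ₘ ν₁) (κ s ∘ₘ ν₂) + (1 - β) * tvDist (κ s ∘ₘ ρ₁) (κ s ∘ₘ ρ₂) := by
          rw [comp_add_eq_comp_comp hκ ht hs, comp_add_eq_comp_comp hκ ht hs, hμ₁, hμ₂]
          simp only [Measure.comp_add, Measure.comp_smul]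
          have := tvDist_smul_add_smul_le (μ₁ := κ s ∘ₘ ν₁) (μ₂ := κ s ∘ₘ ν₂)
            (ν₁ := κ s ∘ₘ ρ₁) (ν₂ := κ s ∘ₘ ρ₂) (ENNReal.ofReal_ne_top (r := β))
            (ENNReal.ofReal_ne_top (r := 1 - β))
          rwa [ENNReal.toReal_ofReal hβ0.le, ENNReal.toReal_ofReal (by linarith)] at this
      _ ≤ β * (4 * α) + (1 - β) * tvDist (κ s ∘ₘ ρ₁) (κ s ∘ₘ ρ₂) := by gcongr
  have hlim := ((tendsto_tvDist_comp_asymptoticTVDist hκ ρ₁ ρ₂).const_mul (1 - β)).const_add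
    (β * (4 * α))
  calc asymptoticTVDist κ μ₁ μ₂ ≤ β * (4 * α) + (1 - β) * asymptoticTVDist κ ρ₁ ρ₂ :=
        ge_of_tendsto hlim hstep
    _ ≤ β * (4 * α) + (1 - β) * Θ :=
        add_le_add le_rfl (mul_le_mul_of_nonneg_left (hΘ ρ₁ ρ₂ ‹_› ‹_›) (by linarith))

theorem asymptoticTVDist_le (hκ : ∀ s t, 0 ≤ s → 0 ≤ t → κ (s + t) = κ t ∘ₖ κ s) {B : Set E}
    {β : ℝ} (hβ0 : 0 < β) (hβ1 : β < 1)
    (hhit : ∀ μ : Measure E, IsProbabilityMeasure μ →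
      ∀ᶠ t in atTop, ENNReal.ofReal β ≤ (κ t ∘ₘ μ) B)
    {z : E} {α : ℝ} (hα : 0 < α) (hB : ∀ y ∈ B, ∀ᶠ s in atTop, tvDist (κ s y) (κ s z) < α)
    (μ ν : Measure E) [IsProbabilityMeasure μ] [IsProbabilityMeasure ν] :
    asymptoticTVDist κ μ ν ≤ 4 * α := by
  set Θ := ⨆ p : ProbabilityMeasure E × ProbabilityMeasure E, asymptoticTVDist κ p.1 p.2
  have hΘ (ρ₁ ρ₂ : Measure E) (h₁ : IsProbabilityMeasure ρ₁) (h₂ : IsProbabilityMeasure ρ₂) :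
      asymptoticTVDist κ ρ₁ ρ₂ ≤ Θ := by
    refine le_ciSup (f := fun p : ProbabilityMeasure E × ProbabilityMeasure E =>
      asymptoticTVDist κ p.1 p.2) ⟨1, ?_⟩ (⟨ρ₁, h₁⟩, ⟨ρ₂, h₂⟩)
    rintro _ ⟨p, rfl⟩
    exact (asymptoticTVDist_le_tvDist _ _ le_rfl).trans tvDist_le_one
  have : Nonempty (ProbabilityMeasure E × ProbabilityMeasure E) := ⟨(⟨μ, ‹_›⟩, ⟨ν, ‹_›⟩)⟩
  have hΘα : Θ ≤ β * (4 * α) + (1 - β) * Θ :=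
    ciSup_le fun p => asymptoticTVDist_le_mul_add_mul hκ hβ0 hβ1 hhit hα hB hΘ p.1 p.2
  exact (hΘ μ ν ‹_› ‹_›).trans (le_of_mul_le_mul_left (by linarith) hβ0)

end Semigroup

lemma iSup_abs_Pf_sub_eq_two_mul_tvDist {E : Type*} [MeasurableSpace E] (P : ℝ → E → Measure E)
    (t : ℝ) (x₁ x₂ : E) :
    ⨆ f : {f : E → ℝ // Measurable f ∧ ∀ y, |f y| ≤ 1}, |Pf P t f.1 x₁ - Pf P t f.1 x₂|
      = 2 * tvDist (P t x₁) (P t x₂) := by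
  simp only [tvDist, Pf]
  ring

lemma eventually_tvDist_lt_of_tvEventuallyContinuousAt {E : Type*} [MetricSpace E]
    [MeasurableSpace E] {P : ℝ → E → Measure E} (hprob : ∀ t x, IsProbabilityMeasure (P t x))
    {z : E} (hec : TVEventuallyContinuousAt P z) {α : ℝ} (hα : 0 < α) :
    ∀ᶠ x in 𝓝 z, ∀ᶠ t in atTop, tvDist (P t x) (P t z) < α := by
  simp only [TVEventuallyContinuousAt, iSup_abs_Pf_sub_eq_two_mul_tvDist] at hec
  refine (eventually_eventually_lt_of_limsup_limsup_eq_zero (C := 2) (fun x t => ?_)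
    (fun x t => ?_) hec (by positivity : 0 < 2 * α)).mono fun _ hx => hx.mono fun _ ht => by
      linarith
  all_goals have := hprob t x; have := hprob t z
  · linarith [tvDist_nonneg (μ := P t x) (ν := P t z)]
  · linarith [tvDist_le_one (μ := P t x) (ν := P t z)]

theorem stmt2_general {E : Type*} [MetricSpace E]
    [MeasurableSpace E] [BorelSpace E]
    (P : ℝ → E → Measure E)
    (hprob : ∀ t x, IsProbabilityMeasure (P t x))
    (hmeas : ∀ t, Measurable (P t))
    (hsemi : ∀ s t : ℝ, 0 ≤ s → 0 ≤ t → ∀ x, P (s + t) x = (P s x).bind (P t))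
    (z : E) (hec : TVEventuallyContinuousAt P z)
    (hlb : ∀ ε > 0, 0 < ⨅ x : E, liminf (fun t => (P t x (ball z ε)).toReal) atTop) :
    ∀ x₁ x₂ : E,
      Tendsto (fun t => ⨆ f : {f : E → ℝ // Measurable f ∧ ∀ y, |f y| ≤ 1},
        |Pf P t f.1 x₁ - Pf P t f.1 x₂|) atTop (𝓝 0) := by
  intro x₁ x₂
  let κ : ℝ → Kernel E E := fun t => ⟨P t, hmeas t⟩
  have (t : ℝ) : IsMarkovKernel (κ t) := ⟨hprob t⟩
  have hκ : ∀ s t, 0 ≤ s → 0 ≤ t → κ (s + t) = κ t ∘ₖ κ s := fun s t hs ht => by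
    ext1 x
    rw [Kernel.comp_apply]
    exact hsemi s t hs ht x
  have hL : asymptoticTVDist κ (.dirac x₁) (.dirac x₂) = 0 := by
    refine le_antisymm (le_of_forall_pos_le_add fun ε hε => ?_) (asymptoticTVDist_nonneg _ _)
    obtain ⟨δ, hδ, hball⟩ := Metric.eventually_nhds_iff_ball.1
      (eventually_tvDist_lt_of_tvEventuallyContinuousAt hprob hec (by positivity : 0 < ε / 4))
    obtain ⟨β, hβ0, hβ1, hhit⟩ :=
      exists_eventually_le_comp_apply (κ := κ) measurableSet_ball (hlb δ hδ)
    linarith [asymptoticTVDist_le hκ hβ0 hβ1 hhit (by positivity) hball (.dirac x₁) (.dirac x₂)]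
  have := (tendsto_tvDist_comp_asymptoticTVDist hκ (.dirac x₁) (.dirac x₂)).const_mul 2
  simp only [hL, mul_zero, tvDist_comp_dirac] at this
  simp only [iSup_abs_Pf_sub_eq_two_mul_tvDist]
  exact this

theorem stmt2 {E : Type*} [MetricSpace E] [CompleteSpace E] [SecondCountableTopology E]
    [MeasurableSpace E] [BorelSpace E]
    (P : ℝ → E → Measure E)
    (hprob : ∀ t x, IsProbabilityMeasure (P t x))
    (hmeas : ∀ t, Measurable (P t))
    (hP0 : ∀ x, P 0 x = Measure.dirac x)
    (hsemi : ∀ s t : ℝ, 0 ≤ s → 0 ≤ t → ∀ x, P (s + t) x = (P s x).bind (P t))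
    (hFeller : ∀ (t : ℝ) (f : BoundedContinuousFunction E ℝ),
      Continuous fun x => ∫ y, f y ∂(P t x))
    (z : E) (hec : TVEventuallyContinuousAt P z)
    (hlb : ∀ ε > 0, 0 < ⨅ x : E, liminf (fun t => (P t x (ball z ε)).toReal) atTop) :
    ∀ x₁ x₂ : E,
      Tendsto (fun t => ⨆ f : {f : E → ℝ // Measurable f ∧ ∀ y, |f y| ≤ 1},
        |Pf P t f.1 x₁ - Pf P t f.1 x₂|) atTop (𝓝 0) :=
  stmt2_general P hprob hmeas hsemi z hec hlb
end

section
/- Consider the SDE dX_t = (aX_t − bX_t³)dt + σ(X_{t−})dN_t on ℝ, where a,b > 0, N_t is a Poisson process of intensity 1, and σ satisfies 0 < m < σ(x) < M and |σ(x)−σ(y)| ≤ L_σ|x−y|. Then there exist constants γ, C > 0 (depending on a, b, M) such that E[|X_t^x − √(a/b)|²] ≤ C|x − √(a/b)|² e^{−γt} + C for all x ∈ ℝ and t ≥ 0. -/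
/-!
Pathwise the SDE is the ODE `y' = a y - b y³` interrupted by jumps of size at most `M` at the
jump times of `N`. With `c = √(a/b)` one has `(y - c)(a y - b y³) ≤ -a (y - c)² + 9 a c²`, so a
Grönwall argument for `(y - c)²` shows that between jumps `|X - c|` stays below
`e^{-a(t-p)} A + 3c` once it starts below `A + 3c`. A jump moves `X` by at most `M`, so the
comparison restarts with `A` increased by `3c + M`; by induction over the finitely many jumps,
`|X_t - c| ≤ e^{-at} |x - c| + (3c + M) ∑_{jumps s ≤ t} e^{-a(t-s)} + 3c`.
Grouping the jumps by `⌊t - s⌋` bounds the sum by `∑_k e^{-ak} N_k`, where `N_k` counts the jumps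
in a window of length at most one; by Cauchy–Schwarz its square is at most
`(1 - e^{-a})⁻¹ ∑_k e^{-ak} N_k²`, and `E[N_k²] ≤ 2e` since `N_k` is Poisson of mean at most one.
-/

open MeasureTheory Filter Metric Set Topology ProbabilityTheory

/-- A (unit-intensity) Poisson process: starts at `0`, has monotone paths, Poisson
distributed increments and independent increments. -/
def IsPoissonProcess {Ω : Type*} [MeasurableSpace Ω] (Pr : Measure Ω) (N : ℝ → Ω → ℕ) : Prop :=
  (∀ ω, N 0 ω = 0) ∧
  (∀ ω, MonotoneOn (fun t => N t ω) (Set.Ici 0)) ∧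
  (∀ s t : ℝ, 0 ≤ s → s ≤ t → ∀ k : ℕ,
    Pr {ω | N t ω - N s ω = k} =
      ENNReal.ofReal (Real.exp (-(t - s)) * (t - s) ^ k / (k.factorial : ℝ))) ∧
  (∀ (n : ℕ) (τ : Fin (n + 1) → ℝ), Monotone τ →
    iIndepFun
      (fun i : Fin n => fun ω => N (τ i.succ) ω - N (τ i.castSucc) ω) Pr)

open Real Function intervalIntegral

/-- `a y - b y³ = -b y (y - c) (y + c)`: outside the ball of radius `3c` about `c` the drift
pulls `y` towards `c` at rate `a`. -/
lemma sub_mul_cubic_drift_le {a b c : ℝ} (hb : 0 ≤ b) (hbc : b * c ^ 2 = a) (y : ℝ) :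
    (y - c) * (a * y - b * y ^ 3) ≤ -a * (y - c) ^ 2 + 9 * a * c ^ 2 := by
  subst hbc
  nlinarith [mul_nonneg hb (sq_nonneg (2 * y ^ 2 - c * y - 3 * c ^ 2)),
    mul_nonneg hb (sq_nonneg (c * (y + c))), mul_nonneg hb (sq_nonneg (c ^ 2))]

lemma nonpos_of_hasDerivAt_le_mul {f f' : ℝ → ℝ} {K p q : ℝ} (hf : ContinuousOn f (Icc p q))
    (hf' : ∀ u ∈ Ioo p q, HasDerivAt f (f' u) u) (hle : ∀ u ∈ Ioo p q, f' u ≤ K * f u)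
    (hp : f p ≤ 0) : ∀ u ∈ Icc p q, f u ≤ 0 := by
  have hanti : AntitoneOn (fun u => exp (-K * u) * f u) (Icc p q) := by
    refine antitoneOn_of_hasDerivWithinAt_nonpos (convex_Icc p q)
      ((continuous_const.mul continuous_id).rexp.continuousOn.mul hf) (fun u hu => ?_)
      (f' := fun u => exp (-K * u) * (f' u - K * f u)) fun u hu => ?_
    · rw [interior_Icc] at hu
      have h := ((hasDerivAt_id' u).const_mul (-K)).exp.mul (hf' u hu)
      exact (h.congr_deriv (by ring)).hasDerivWithinAt
    · rw [interior_Icc] at hu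
      exact mul_nonpos_of_nonneg_of_nonpos (exp_pos _).le (by linarith [hle u hu])
  intro u hu
  refine nonpos_of_mul_nonpos_right ((hanti ⟨le_rfl, hu.1.trans hu.2⟩ hu hu.1).trans ?_) (exp_pos _)
  exact mul_nonpos_of_nonneg_of_nonpos (exp_pos _).le hp

lemma abs_sub_le_of_hasDerivAt_cubic {a b c A p q : ℝ} {g : ℝ → ℝ} (ha : 0 ≤ a) (hb : 0 ≤ b)
    (hc : 0 ≤ c) (hbc : b * c ^ 2 = a) (hA : 0 ≤ A) (hg : ContinuousOn g (Icc p q))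
    (hg' : ∀ u ∈ Ioo p q, HasDerivAt g (a * g u - b * g u ^ 3) u)
    (hgp : |g p - c| ≤ A + 3 * c) :
    ∀ u ∈ Icc p q, |g u - c| ≤ exp (-a * (u - p)) * A + 3 * c := by
  set W : ℝ → ℝ := fun u => exp (-a * (u - p)) * A + 3 * c
  have hW : ∀ u, HasDerivAt W (-a * (exp (-a * (u - p)) * A)) u := fun u => by
    have := ((((hasDerivAt_id' u).sub_const p).const_mul (-a)).exp.mul_const A).add_const (3 * c)
    exact this.congr_deriv (by ring)
  have hf := nonpos_of_hasDerivAt_le_mul (f := fun u => (g u - c) ^ 2 - W u ^ 2) (K := -2 * a)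
    (((hg.sub continuousOn_const).pow 2).sub
      ((continuous_iff_continuousAt.2 fun u => (hW u).continuousAt).continuousOn.pow 2))
    (fun u hu => (((hg' u hu).sub_const c).pow 2).sub ((hW u).pow 2)) (fun u _ => ?_)
    (by simp only [W, sub_self, mul_zero, exp_zero, one_mul, sub_nonpos, ← sq_abs (g p - c)]
        exact pow_le_pow_left₀ (abs_nonneg _) hgp 2)
  · intro u hu
    have hWu : 0 ≤ W u := by positivity
    have := hf u hu
    simp only [sub_nonpos] at this
    exact (sq_le_sq₀ (abs_nonneg _) hWu).1 (by rwa [sq_abs])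
  · have hE : 0 ≤ exp (-a * (u - p)) * A := by positivity
    have := sub_mul_cubic_drift_le hb hbc (g u)
    simp only [W, Nat.cast_ofNat, Nat.add_one_sub_one, pow_one]
    nlinarith [mul_nonneg (mul_nonneg ha hc) hE]

lemma continuousOn_primitive_of_intervalIntegrable {h : ℝ → ℝ} {q : ℝ} (hq : 0 ≤ q)
    (hint : IntervalIntegrable h volume 0 q) :
    ContinuousOn (fun u => ∫ s in 0..u, h s) (Icc 0 q) := by
  simpa [uIcc_of_le hq] using continuousOn_primitive_interval' hint (left_mem_uIcc (a := 0))

lemma continuousOn_of_eq_const_add_primitive {h g : ℝ → ℝ} {k p q : ℝ} (hp : 0 ≤ p)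
    (hint : IntervalIntegrable h volume 0 q) (heq : ∀ u ∈ Ioo p q, g u = k + ∫ s in 0..u, h s) :
    ContinuousOn g (Ioo p q) := by
  rcases le_total p q with hpq | hqp
  · exact (continuousOn_const.add ((continuousOn_primitive_of_intervalIntegrable (hp.trans hpq)
      hint).mono fun v hv => ⟨hp.trans hv.1.le, hv.2.le⟩)).congr heq
  · simp [Ioo_eq_empty_of_le hqp]

lemma hasDerivAt_const_add_primitive {φ g : ℝ → ℝ} {k p q : ℝ} (hφ : Continuous φ)
    (hp : 0 ≤ p) (hint : IntervalIntegrable (fun s => φ (g s)) volume 0 q)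
    (heq : ∀ u ∈ Ioo p q, g u = k + ∫ s in 0..u, φ (g s)) :
    ∀ u ∈ Ioo p q, HasDerivAt (fun u => k + ∫ s in 0..u, φ (g s)) (φ (g u)) u := by
  intro u hu
  have hq : 0 ≤ q := hp.trans (hu.1.trans hu.2).le
  have hφg : ContinuousOn (fun s => φ (g s)) (Ioo p q) :=
    hφ.comp_continuousOn (continuousOn_of_eq_const_add_primitive hp hint heq)
  refine (integral_hasDerivAt_right (hint.mono_set ?_)
    (hφg.stronglyMeasurableAtFilter isOpen_Ioo u hu)
    (hφg.continuousAt (Ioo_mem_nhds hu.1 hu.2))).const_add k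
  rw [uIcc_of_le hq, uIcc_of_le (hp.trans hu.1.le)]
  exact Icc_subset_Icc_right hu.2.le

/-- The interval integral is `0` where the integrand is not integrable, so integrability must be
carried from `p` to `q`: below the supremum `τ` of the good times `g` is continuous and bounded,
beyond `τ` it would be constant. -/
lemma intervalIntegrable_of_forall_abs_le {φ g : ℝ → ℝ} {k p q R : ℝ} (hφ : Continuous φ)
    (hp : 0 ≤ p) (hpq : p ≤ q) (hint : IntervalIntegrable (fun s => φ (g s)) volume 0 p)
    (heq : ∀ u ∈ Ioo p q, g u = k + ∫ s in 0..u, φ (g s))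
    (hbound : ∀ u ∈ Ioo p q, IntervalIntegrable (fun s => φ (g s)) volume 0 u → |g u| ≤ R) :
    IntervalIntegrable (fun s => φ (g s)) volume 0 q := by
  set I := {v ∈ Icc p q | IntervalIntegrable (fun s => φ (g s)) volume 0 v}
  have hpI : p ∈ I := ⟨⟨le_rfl, hpq⟩, hint⟩
  have hIbdd : BddAbove I := ⟨q, fun v hv => hv.1.2⟩
  set τ := sSup I
  have hpτ : p ≤ τ := le_csSup hIbdd hpI
  have hτq : τ ≤ q := csSup_le ⟨p, hpI⟩ fun v hv => hv.1.2
  obtain ⟨B, hB⟩ := (isCompact_closedBall (0 : ℝ) R).exists_bound_of_continuousOn hφ.continuousOn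
  have hbelow : ∀ u ∈ Ioo p τ, ContinuousAt g u ∧ ‖φ (g u)‖ ≤ B := by
    intro u hu
    obtain ⟨v, ⟨hvpq, hvint⟩, huv⟩ := exists_lt_of_lt_csSup ⟨p, hpI⟩ hu.2
    have hg : ContinuousOn g (Ioo p v) := continuousOn_of_eq_const_add_primitive hp hvint
      fun w hw => heq w ⟨hw.1, hw.2.trans_le hvpq.2⟩
    refine ⟨hg.continuousAt (Ioo_mem_nhds hu.1 huv), hB _ ?_⟩
    rw [mem_closedBall, dist_zero_right, Real.norm_eq_abs]
    refine hbound u ⟨hu.1, hu.2.trans_le hτq⟩ (hvint.mono_set ?_)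
    rw [uIcc_of_le (hp.trans hu.1.le), uIcc_of_le (hp.trans hvpq.1)]
    exact Icc_subset_Icc_right huv.le
  have hτint : IntervalIntegrable (fun s => φ (g s)) volume 0 τ := by
    refine hint.trans ((intervalIntegrable_iff_integrableOn_Ioo_of_le hpτ).2 ?_)
    exact ⟨(hφ.comp_continuousOn fun u hu => (hbelow u hu).1.continuousWithinAt)
      |>.aestronglyMeasurable measurableSet_Ioo, .restrict_of_bounded (C := B) (by simp)
      (ae_restrict_of_forall_mem measurableSet_Ioo fun u hu => (hbelow u hu).2)⟩
  obtain hτ | hτ := hτq.eq_or_lt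
  · rwa [← hτ]
  have hconst : EqOn (fun s => φ (g s)) (fun _ => φ k) (Ioo τ q) := by
    intro u hu
    have hnot : ¬IntervalIntegrable (fun s => φ (g s)) volume 0 u := fun hu' =>
      (le_csSup hIbdd ⟨⟨hpτ.trans hu.1.le, hu.2.le⟩, hu'⟩).not_gt hu.1
    simp only [heq u ⟨hpτ.trans_lt hu.1, hu.2⟩, integral_undef hnot, add_zero]
  have hqI : q ∈ I := ⟨⟨hpq, le_rfl⟩, hτint.trans <|
    (intervalIntegrable_iff_integrableOn_Ioo_of_le hτ.le).2 <|
      (integrableOn_const (by simp)).congr_fun hconst.symm measurableSet_Ioo⟩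
  exact absurd (le_csSup hIbdd hqI) hτ.not_ge

lemma abs_sub_le_of_eq_const_add_primitive_cubic {a b c A k p q : ℝ} {g : ℝ → ℝ} (ha : 0 ≤ a)
    (hb : 0 ≤ b) (hc : 0 ≤ c) (hbc : b * c ^ 2 = a) (hA : 0 ≤ A) (hp : 0 ≤ p) (hpq : p ≤ q)
    (hint : IntervalIntegrable (fun s => a * g s - b * g s ^ 3) volume 0 q)
    (heq : ∀ u ∈ Ioo p q, g u = k + ∫ s in (0 : ℝ)..u, (a * g s - b * g s ^ 3))
    (hgp : |k + (∫ s in (0 : ℝ)..p, (a * g s - b * g s ^ 3)) - c| ≤ A + 3 * c) :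
    ∀ u ∈ Icc p q,
      |k + (∫ s in (0 : ℝ)..u, (a * g s - b * g s ^ 3)) - c| ≤ exp (-a * (u - p)) * A + 3 * c :=
  abs_sub_le_of_hasDerivAt_cubic ha hb hc hbc hA
    ((continuousOn_const.add (continuousOn_primitive_of_intervalIntegrable (hp.trans hpq)
      hint)).mono (Icc_subset_Icc_left hp))
    (fun u hu => (hasDerivAt_const_add_primitive (φ := fun y => a * y - b * y ^ 3) (by fun_prop)
      hp hint heq u hu).congr_deriv (by rw [heq u hu])) hgp

def SolvesCubicJumpEq (a b x : ℝ) (S : Set ℝ) (ς g : ℝ → ℝ) : Prop :=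
  ∀ t, 0 ≤ t → g t = x + (∫ s in (0 : ℝ)..t, (a * g s - b * g s ^ 3)) + ∑ᶠ s ∈ S ∩ Ioc 0 t, ς s

noncomputable def jumpBound (a c M x : ℝ) (S : Set ℝ) (t : ℝ) : ℝ :=
  exp (-a * t) * |x - c| + (3 * c + M) * ∑ᶠ s ∈ S ∩ Ioc 0 t, exp (-a * (t - s)) + 3 * c

lemma three_mul_le_jumpBound {a c M x t : ℝ} {S : Set ℝ} (hc : 0 ≤ c) (hM : 0 ≤ M) :
    3 * c ≤ jumpBound a c M x S t := by
  have : 0 ≤ ∑ᶠ s ∈ S ∩ Ioc 0 t, exp (-a * (t - s)) :=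
    finsum_nonneg fun _ => finsum_nonneg fun _ => (exp_pos _).le
  unfold jumpBound
  nlinarith [mul_nonneg (exp_pos (-a * t)).le (abs_nonneg (x - c))]

section Gap

variable {S : Set ℝ} {p q : ℝ}

lemma inter_Ioc_eq_union_of_gap (hp : 0 ≤ p) (hpq : p < q) (hgap : S ∩ Ioo p q = ∅) :
    S ∩ Ioc 0 q = S ∩ Ioc 0 p ∪ S ∩ {q} := by
  ext s
  simp only [mem_inter_iff, mem_Ioc, mem_union, mem_singleton_iff]
  constructor
  · rintro ⟨hs, hs0, hsq⟩
    rcases hsq.eq_or_lt with rfl | hsq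
    · exact .inr ⟨hs, rfl⟩
    · refine .inl ⟨hs, hs0, not_lt.1 fun hps => ?_⟩
      exact (eq_empty_iff_forall_notMem.1 hgap) s ⟨hs, hps, hsq⟩
  · rintro (⟨hs, hs0, hsp⟩ | ⟨hs, rfl⟩)
    · exact ⟨hs, hs0, hsp.trans hpq.le⟩
    · exact ⟨hs, hp.trans_lt hpq, le_rfl⟩

lemma finsum_mem_inter_Ioc_of_gap {M : Type*} [AddCommMonoid M] (f : ℝ → M) (hp : 0 ≤ p)
    (hpq : p < q) (hgap : S ∩ Ioo p q = ∅) (hfin : (S ∩ Ioc 0 p).Finite) :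
    ∑ᶠ s ∈ S ∩ Ioc 0 q, f s = ∑ᶠ s ∈ S ∩ Ioc 0 p, f s + S.indicator f q := by
  have hdisj : Disjoint (S ∩ Ioc 0 p) (S ∩ {q}) :=
    disjoint_left.2 fun s hs hs' => hpq.not_ge (hs'.2 ▸ hs.2.2)
  rw [inter_Ioc_eq_union_of_gap hp hpq hgap,
    finsum_mem_union hdisj hfin ((finite_singleton q).inter_of_right S)]
  by_cases hq : q ∈ S <;> simp [hq]

lemma jumpBound_of_gap {a c M x : ℝ} (hp : 0 ≤ p) (hpq : p < q) (hgap : S ∩ Ioo p q = ∅)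
    (hfin : (S ∩ Ioc 0 p).Finite) :
    jumpBound a c M x S q = exp (-a * (q - p)) * (jumpBound a c M x S p - 3 * c) + 3 * c +
      S.indicator (fun _ => 3 * c + M) q := by
  have hsum : ∑ᶠ s ∈ S ∩ Ioc 0 p, exp (-a * (q - s)) =
      exp (-a * (q - p)) * ∑ᶠ s ∈ S ∩ Ioc 0 p, exp (-a * (p - s)) := by
    rw [mul_finsum_mem]
    exact finsum_mem_congr rfl fun s _ => by rw [← exp_add]; ring_nf
  simp only [jumpBound, finsum_mem_inter_Ioc_of_gap _ hp hpq hgap hfin, hsum]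
  rw [show -a * q = -a * (q - p) + -a * p by ring, exp_add]
  by_cases hq : q ∈ S
  · simp only [indicator_of_mem hq, sub_self, mul_zero, exp_zero]; ring
  · simp only [indicator_of_notMem hq]; ring

end Gap

lemma forall_nonneg_of_gap_step {S : Set ℝ} {P : ℝ → Prop} (hfin : ∀ t, (S ∩ Ioo 0 t).Finite)
    (h0 : P 0) (hstep : ∀ p q, 0 ≤ p → p < q → S ∩ Ioo p q = ∅ → P p → P q) :
    ∀ t, 0 ≤ t → P t := by
  have hbase : ∀ t, 0 ≤ t → S ∩ Ioo 0 t = ∅ → P t := fun t ht hempty => by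
    rcases ht.eq_or_lt with rfl | ht
    exacts [h0, hstep 0 t le_rfl ht hempty h0]
  suffices ∀ n : ℕ, ∀ t, 0 ≤ t → (S ∩ Ioo 0 t).ncard ≤ n → P t from
    fun t ht => this _ t ht le_rfl
  intro n
  induction n with
  | zero => exact fun t ht hn => hbase t ht ((ncard_eq_zero (hfin t)).1 (Nat.le_zero.1 hn))
  | succ n ih =>
    intro t ht hn
    rcases (S ∩ Ioo 0 t).eq_empty_or_nonempty with hempty | hne
    · exact hbase t ht hempty
    obtain ⟨s, ⟨hsS, hs0, hst⟩, hmax⟩ := exists_max_image _ id (hfin t) hne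
    have hsub : S ∩ Ioo 0 s ⊂ S ∩ Ioo 0 t :=
      ssubset_of_subset_not_subset (inter_subset_inter_right _ (Ioo_subset_Ioo_right hst.le))
        fun h => (h ⟨hsS, hs0, hst⟩).2.2.false
    refine hstep s t hs0.le hst (eq_empty_iff_forall_notMem.2 fun z hz => ?_)
      (ih s hs0.le (Nat.le_of_lt_succ ((ncard_lt_ncard hsub (hfin t)).trans_le hn)))
    exact (hmax z ⟨hz.1, hs0.trans hz.2.1, hz.2.2⟩).not_gt hz.2.1

section CubicJump

variable {a b c M x : ℝ} {S : Set ℝ} {ς g : ℝ → ℝ}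

theorem SolvesCubicJumpEq.intervalIntegrable_and_abs_sub_le_of_gap
    (hg : SolvesCubicJumpEq a b x S ς g) (ha : 0 ≤ a) (hb : 0 ≤ b) (hc : 0 ≤ c)
    (hbc : b * c ^ 2 = a) (hς : ∀ s, |ς s| ≤ M) (hfin : ∀ t, (S ∩ Ioc 0 t).Finite)
    {p q : ℝ} (hp : 0 ≤ p) (hpq : p < q) (hgap : S ∩ Ioo p q = ∅)
    (hint : IntervalIntegrable (fun s => a * g s - b * g s ^ 3) volume 0 p)
    (hbd : |g p - c| ≤ jumpBound a c M x S p) :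
    IntervalIntegrable (fun s => a * g s - b * g s ^ 3) volume 0 q ∧
      |g q - c| ≤ jumpBound a c M x S q := by
  set k := x + ∑ᶠ s ∈ S ∩ Ioc 0 p, ς s
  set A := jumpBound a c M x S p - 3 * c
  have hA : 0 ≤ A := sub_nonneg.2 (three_mul_le_jumpBound hc ((abs_nonneg _).trans (hς 0)))
  have hJ : ∀ u, p < u → u ≤ q →
      ∑ᶠ s ∈ S ∩ Ioc 0 u, ς s = ∑ᶠ s ∈ S ∩ Ioc 0 p, ς s + S.indicator ς u := fun u hpu huq =>
    finsum_mem_inter_Ioc_of_gap ς hp hpu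
      (eq_empty_of_subset_empty (hgap ▸ inter_subset_inter_right S (Ioo_subset_Ioo_right huq)))
      (hfin p)
  have heq : ∀ u ∈ Ioo p q, g u = k + ∫ s in (0 : ℝ)..u, (a * g s - b * g s ^ 3) := by
    intro u hu
    rw [hg u (hp.trans hu.1.le), hJ u hu.1 hu.2.le,
      indicator_of_notMem fun hu' => (eq_empty_iff_forall_notMem.1 hgap) u ⟨hu', hu⟩]
    ring
  have hgp : |k + (∫ s in (0 : ℝ)..p, (a * g s - b * g s ^ 3)) - c| ≤ A + 3 * c := by
    rw [sub_add_cancel, show k + ∫ s in (0 : ℝ)..p, (a * g s - b * g s ^ 3) = g p by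
      rw [hg p hp]; ring]
    exact hbd
  have hseg := fun r (hpr : p ≤ r) (hrq : r ≤ q) hr =>
    abs_sub_le_of_eq_const_add_primitive_cubic ha hb hc hbc hA hp hpr hr
      (fun u hu => heq u ⟨hu.1, hu.2.trans_le hrq⟩) hgp
  have hintq := intervalIntegrable_of_forall_abs_le (φ := fun y => a * y - b * y ^ 3)
    (by fun_prop) hp hpq.le hint heq (R := A + 4 * c) fun u hu hu' => by
      have h1 := heq u hu ▸ hseg u hu.1.le hu.2.le hu' u ⟨hu.1.le, le_rfl⟩
      have h2 : exp (-a * (u - p)) ≤ 1 := exp_le_one_iff.2 (by nlinarith [hu.1])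
      have h3 := abs_sub_abs_le_abs_sub (g u) c
      rw [abs_of_nonneg hc] at h3
      nlinarith
  refine ⟨hintq, ?_⟩
  have hgq : g q - c =
      (k + (∫ s in (0 : ℝ)..q, (a * g s - b * g s ^ 3)) - c) + S.indicator ς q := by
    rw [hg q (hp.trans hpq.le), hJ q hpq le_rfl]; ring
  have hind : |S.indicator ς q| ≤ S.indicator (fun _ => 3 * c + M) q := by
    by_cases hq : q ∈ S
    · simp only [indicator_of_mem hq]; linarith [hς q]
    · simp [hq]
  rw [jumpBound_of_gap hp hpq hgap (hfin p), hgq]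
  linarith [abs_add_le (k + (∫ s in (0 : ℝ)..q, (a * g s - b * g s ^ 3)) - c) (S.indicator ς q),
    hseg q hpq.le le_rfl hintq q ⟨hpq.le, le_rfl⟩]

theorem SolvesCubicJumpEq.abs_sub_le_jumpBound (hg : SolvesCubicJumpEq a b x S ς g)
    (ha : 0 ≤ a) (hb : 0 ≤ b) (hc : 0 ≤ c) (hbc : b * c ^ 2 = a) (hς : ∀ s, |ς s| ≤ M)
    (hfin : ∀ t, (S ∩ Ioc 0 t).Finite) {t : ℝ} (ht : 0 ≤ t) :
    |g t - c| ≤ jumpBound a c M x S t := by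
  have hg0 : g 0 = x := by simp [hg 0 le_rfl]
  refine (forall_nonneg_of_gap_step
    (P := fun t => IntervalIntegrable (fun s => a * g s - b * g s ^ 3) volume 0 t ∧
      |g t - c| ≤ jumpBound a c M x S t)
    (fun t => (hfin t).subset (inter_subset_inter_right _ Ioo_subset_Ioc_self))
    ⟨.refl, by simpa [jumpBound, hg0] using hc⟩
    (fun p q hp hpq hgap hP =>
      hg.intervalIntegrable_and_abs_sub_le_of_gap ha hb hc hbc hς hfin hp hpq hgap hP.1 hP.2)
    t ht).2

end CubicJump

/-- `N` is strictly increasing on its jumps, since `N s ≤ leftLim N s' < N s'` for jumps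
`s < s'`. -/
lemma MonotoneOn.finite_jumps_inter_Ioc_and_ncard_le {N : ℝ → ℕ} (hN : MonotoneOn N (Ici 0))
    {u v : ℝ} (hu : 0 ≤ u) :
    ({s | leftLim N s ≠ N s} ∩ Ioc u v).Finite ∧
      ({s | leftLim N s ≠ N s} ∩ Ioc u v).ncard ≤ N v - N u := by
  set N' : ℝ → ℕ := fun t => N (max t 0)
  have hN' : Monotone N' := fun s t hst =>
    hN (le_max_right s 0) (le_max_right t 0) (max_le_max_right 0 hst)
  have hN'N : ∀ t, 0 ≤ t → N' t = N t := fun t ht => by simp [N', ht]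
  have hlt : ∀ s ∈ {s | leftLim N s ≠ N s} ∩ Ioc u v, leftLim N' s < N s := by
    rintro s ⟨hs, hus, -⟩
    have hs0 : 0 < s := hu.trans_lt hus
    have hlim : leftLim N s = leftLim N' s := leftLim_eq_of_tendsto <|
      (hN'.tendsto_leftLim s).congr' <| by
        filter_upwards [Ioo_mem_nhdsLT hs0] with r hr using hN'N r hr.1.le
    rw [← hlim]
    refine lt_of_le_of_ne ?_ hs
    rw [hlim, ← hN'N s hs0.le]
    exact hN'.leftLim_le le_rfl
  have hmaps : MapsTo N ({s | leftLim N s ≠ N s} ∩ Ioc u v) (Finset.Ioc (N u) (N v) : Set ℕ) :=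
    fun s hs => by
      rw [Finset.coe_Ioc, mem_Ioc]
      exact ⟨((hN'N u hu).symm.trans_le (hN'.le_leftLim hs.2.1)).trans_lt (hlt s hs),
        hN (hu.trans hs.2.1.le) (hu.trans (hs.2.1.le.trans hs.2.2)) hs.2.2⟩
  have hinj : InjOn N ({s | leftLim N s ≠ N s} ∩ Ioc u v) := by
    refine StrictMonoOn.injOn fun s hs s' hs' hss' => ?_
    exact ((hN'N s (hu.trans hs.2.1.le)).symm.trans_le (hN'.le_leftLim hss')).trans_lt (hlt s' hs')
  refine ⟨.of_injOn hmaps hinj (Finset.finite_toSet _), ?_⟩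
  simpa using ncard_le_ncard_of_injOn N hmaps hinj

lemma finsum_exp_le_sum_pow_mul_ncard {S : Set ℝ} {a t : ℝ} (ha : 0 ≤ a)
    (hfin : (S ∩ Ioc 0 t).Finite) :
    ∑ᶠ s ∈ S ∩ Ioc 0 t, exp (-a * (t - s)) ≤ ∑ k ∈ Finset.range (⌊t⌋₊ + 1),
      exp (-a) ^ k * (S ∩ Ioc (max (t - k - 1) 0) (max (t - k) 0)).ncard := by
  classical
  -- group the jumps `s` by `k = ⌊t - s⌋₊`
  have hmaps : ∀ s ∈ hfin.toFinset, ⌊t - s⌋₊ ∈ Finset.range (⌊t⌋₊ + 1) := fun s hs => by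
    rw [Finite.mem_toFinset] at hs
    exact Finset.mem_range_succ_iff.2 (Nat.floor_le_floor (by linarith [hs.2.1]))
  rw [finsum_mem_eq_finite_toFinset_sum _ hfin, ← Finset.sum_fiberwise_of_maps_to hmaps]
  gcongr with k
  set F := {s ∈ hfin.toFinset | ⌊t - s⌋₊ = k}
  have hF : ∀ s ∈ F, s ∈ S ∧ t - k - 1 < s ∧ 0 < s ∧ s ≤ t - k := fun s hs => by
    simp only [F, Finset.mem_filter, Finite.mem_toFinset] at hs
    obtain ⟨⟨hsS, hs0, hst⟩, rfl⟩ := hs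
    exact ⟨hsS, by linarith [Nat.lt_floor_add_one (t - s)], hs0,
      by linarith [Nat.floor_le (sub_nonneg.2 hst)]⟩
  calc ∑ s ∈ F, exp (-a * (t - s)) ≤ F.card • exp (-a) ^ k := by
        refine Finset.sum_le_card_nsmul _ _ _ fun s hs => ?_
        rw [← exp_nat_mul, exp_le_exp]
        nlinarith [(hF s hs).2.2.2]
    _ = exp (-a) ^ k * F.card := by rw [nsmul_eq_mul, mul_comm]
    _ ≤ _ := by
        gcongr
        rw [← ncard_coe_finset]
        refine ncard_le_ncard (fun s hs => ?_) (hfin.subset fun s hs => ?_)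
        · obtain ⟨hsS, h1, hs0, h2⟩ := hF s hs
          exact ⟨hsS, max_lt h1 hs0, h2.trans (le_max_left _ _)⟩
        · obtain ⟨hsS, hlo, hhi⟩ := hs
          have hs0 : 0 < s := (le_max_right _ _).trans_lt hlo
          refine ⟨hsS, hs0, ?_⟩
          rcases le_max_iff.1 hhi with h | h
          · linarith [k.cast_nonneg (α := ℝ)]
          · exact absurd h hs0.not_ge

lemma sum_range_pow_le_inv_one_sub {ρ : ℝ} (hρ0 : 0 ≤ ρ) (hρ1 : ρ < 1) (K : ℕ) :
    ∑ k ∈ Finset.range K, ρ ^ k ≤ (1 - ρ)⁻¹ := by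
  have h := geom_sum_Ico_le_of_lt_one (m := 0) (n := K) hρ0 hρ1
  rwa [← Finset.range_eq_Ico, pow_zero, one_div] at h

lemma sq_sum_pow_mul_le {ρ : ℝ} (hρ0 : 0 ≤ ρ) (hρ1 : ρ < 1) (K : ℕ) (D : ℕ → ℝ) :
    (∑ k ∈ Finset.range K, ρ ^ k * D k) ^ 2 ≤
      (1 - ρ)⁻¹ * ∑ k ∈ Finset.range K, ρ ^ k * D k ^ 2 := by
  refine (Finset.sum_sq_le_sum_mul_sum_of_sq_le_mul _ (f := fun k => ρ ^ k)
    (g := fun k => ρ ^ k * D k ^ 2) (fun k _ => pow_nonneg hρ0 k) (fun k _ => by positivity)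
    fun k _ => le_of_eq (by ring)).trans ?_
  have := sum_range_pow_le_inv_one_sub hρ0 hρ1 K
  gcongr

lemma sq_jumpBound_le {a c M x t : ℝ} {S : Set ℝ} (ha : 0 < a) (hc : 0 ≤ c) (hM : 0 ≤ M)
    (ht : 0 ≤ t) (hfin : (S ∩ Ioc 0 t).Finite) (n : ℕ → ℕ)
    (hn : ∀ k : ℕ, (S ∩ Ioc (max (t - k - 1) 0) (max (t - k) 0)).ncard ≤ n k) :
    jumpBound a c M x S t ^ 2 ≤ 3 * exp (-a * t) * |x - c| ^ 2 + 27 * c ^ 2 +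
      ∑ k ∈ Finset.range (⌊t⌋₊ + 1),
        3 * (3 * c + M) ^ 2 * (1 - exp (-a))⁻¹ * exp (-a) ^ k * (n k : ℝ) ^ 2 := by
  set Q := ∑ k ∈ Finset.range (⌊t⌋₊ + 1), exp (-a) ^ k * (n k : ℝ)
  have hP : 0 ≤ ∑ᶠ s ∈ S ∩ Ioc 0 t, exp (-a * (t - s)) :=
    finsum_nonneg fun _ => finsum_nonneg fun _ => (exp_pos _).le
  have hPQ : ∑ᶠ s ∈ S ∩ Ioc 0 t, exp (-a * (t - s)) ≤ Q :=
    (finsum_exp_le_sum_pow_mul_ncard ha.le hfin).trans <| Finset.sum_le_sum fun k _ => by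
      gcongr; exact_mod_cast hn k
  have hQ := sq_sum_pow_mul_le (exp_pos (-a)).le (exp_lt_one_iff.2 (by linarith))
    (⌊t⌋₊ + 1) fun k => (n k : ℝ)
  have hexp : exp (-a * t) ^ 2 ≤ exp (-a * t) :=
    pow_le_of_le_one (exp_pos _).le (exp_le_one_iff.2 (by nlinarith)) two_ne_zero
  have hB : jumpBound a c M x S t ≤ exp (-a * t) * |x - c| + (3 * c + M) * Q + 3 * c := by
    unfold jumpBound; gcongr
  calc jumpBound a c M x S t ^ 2
      ≤ (exp (-a * t) * |x - c| + (3 * c + M) * Q + 3 * c) ^ 2 := by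
        gcongr; unfold jumpBound; positivity
    _ ≤ 3 * (exp (-a * t) * |x - c|) ^ 2 + 3 * ((3 * c + M) * Q) ^ 2 + 3 * (3 * c) ^ 2 := by
        nlinarith [sq_nonneg (exp (-a * t) * |x - c| - (3 * c + M) * Q),
          sq_nonneg (exp (-a * t) * |x - c| - 3 * c), sq_nonneg ((3 * c + M) * Q - 3 * c)]
    _ ≤ _ := by
        have h1 : (exp (-a * t) * |x - c|) ^ 2 ≤ exp (-a * t) * |x - c| ^ 2 := by
          rw [mul_pow]; exact mul_le_mul_of_nonneg_right hexp (sq_nonneg _)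
        have h2 : ((3 * c + M) * Q) ^ 2 ≤ (3 * c + M) ^ 2 * ((1 - exp (-a))⁻¹ *
            ∑ k ∈ Finset.range (⌊t⌋₊ + 1), exp (-a) ^ k * (n k : ℝ) ^ 2) := by
          rw [mul_pow]; exact mul_le_mul_of_nonneg_left hQ (sq_nonneg _)
        have h3 : ∑ k ∈ Finset.range (⌊t⌋₊ + 1),
            3 * (3 * c + M) ^ 2 * (1 - exp (-a))⁻¹ * exp (-a) ^ k * (n k : ℝ) ^ 2 =
            3 * ((3 * c + M) ^ 2 * ((1 - exp (-a))⁻¹ *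
              ∑ k ∈ Finset.range (⌊t⌋₊ + 1), exp (-a) ^ k * (n k : ℝ) ^ 2)) := by
          rw [Finset.mul_sum, Finset.mul_sum, Finset.mul_sum]
          exact Finset.sum_congr rfl fun k _ => by ring
        rw [h3]
        linarith

/-- `E` need not be measurable (the paths of a Poisson process are not assumed to be), so its level
sets are replaced by measurable hulls. -/
lemma exists_measurable_ge_comp_lintegral_eq {Ω : Type*} [MeasurableSpace Ω] (μ : Measure Ω)
    (E : Ω → ℕ) (f : ℕ → ENNReal) : ∃ G : Ω → ENNReal, Measurable G ∧ (∀ ω, f (E ω) ≤ G ω) ∧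
      ∫⁻ ω, G ω ∂μ = ∑' j, f j * μ {ω | E ω = j} := by
  have hmeas : ∀ j, Measurable ((toMeasurable μ {ω | E ω = j}).indicator (1 : Ω → ENNReal)) :=
    fun j => measurable_one.indicator (measurableSet_toMeasurable _ _)
  refine ⟨fun ω => ∑' j, f j * (toMeasurable μ {ω | E ω = j}).indicator 1 ω,
    .tsum fun j => (hmeas j).const_mul _, fun ω => ?_, ?_⟩
  · refine le_trans (le_of_eq ?_) (ENNReal.le_tsum (E ω))
    rw [indicator_of_mem (subset_toMeasurable μ {ω' | E ω' = E ω} rfl), Pi.one_apply, mul_one]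
  · rw [lintegral_tsum fun j => ((hmeas j).const_mul _).aemeasurable]
    congr 1 with j
    rw [lintegral_const_mul _ (hmeas j), lintegral_indicator_one (measurableSet_toMeasurable _ _),
      measure_toMeasurable]

lemma nat_sq_le_two_mul_two_pow (j : ℕ) : j ^ 2 ≤ 2 * 2 ^ j := by
  induction j with
  | zero => norm_num
  | succ j ih =>
    have := j.lt_two_pow_self
    rw [pow_succ 2 j]
    nlinarith

lemma tsum_sq_mul_poisson_le {u : ℝ} (hu : 0 ≤ u) :
    ∑' j : ℕ, (j : ENNReal) ^ 2 * ENNReal.ofReal (exp (-u) * u ^ j / j.factorial) ≤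
      ENNReal.ofReal (2 * exp u) := by
  -- by `j² ≤ 2 * 2 ^ j` the sum is at most `2 e^{-u} e^{2u}`
  have hsum : HasSum (fun j : ℕ => 2 * exp (-u) * ((2 * u) ^ j / j.factorial)) (2 * exp u) := by
    have := (NormedSpace.expSeries_div_hasSum_exp (2 * u)).mul_left (2 * exp (-u))
    rwa [← exp_eq_exp_ℝ, mul_assoc, ← exp_add, show -u + 2 * u = u by ring] at this
  rw [← hsum.tsum_eq, ENNReal.ofReal_tsum_of_nonneg (fun j => by positivity) hsum.summable]
  refine ENNReal.tsum_le_tsum fun j => ?_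
  rw [← ENNReal.ofReal_natCast, ← ENNReal.ofReal_pow j.cast_nonneg,
    ← ENNReal.ofReal_mul (by positivity)]
  refine ENNReal.ofReal_le_ofReal ?_
  have hj : (j : ℝ) ^ 2 ≤ 2 * 2 ^ j := by exact_mod_cast nat_sq_le_two_mul_two_pow j
  calc (j : ℝ) ^ 2 * (exp (-u) * u ^ j / j.factorial)
      ≤ 2 * 2 ^ j * (exp (-u) * u ^ j / j.factorial) := by gcongr
    _ = _ := by ring

lemma exists_integrable_sq_le_of_poisson {Ω : Type*} [MeasurableSpace Ω] {μ : Measure Ω}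
    {E : Ω → ℕ} {u : ℝ} (hu : 0 ≤ u)
    (hE : ∀ j : ℕ, μ {ω | E ω = j} = ENNReal.ofReal (exp (-u) * u ^ j / j.factorial)) :
    ∃ G : Ω → ℝ, Integrable G μ ∧ (∀ᵐ ω ∂μ, (E ω : ℝ) ^ 2 ≤ G ω) ∧ ∫ ω, G ω ∂μ ≤ 2 * exp u := by
  obtain ⟨G, hGm, hEG, hGint⟩ :=
    exists_measurable_ge_comp_lintegral_eq μ E fun j => (j : ENNReal) ^ 2
  simp only [hE] at hGint
  have hle := hGint.trans_le (tsum_sq_mul_poisson_le hu)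
  have hfin : ∫⁻ ω, G ω ∂μ ≠ ⊤ := ne_top_of_le_ne_top ENNReal.ofReal_ne_top hle
  refine ⟨fun ω => (G ω).toReal, integrable_toReal_of_lintegral_ne_top hGm.aemeasurable hfin,
    ?_, ?_⟩
  · filter_upwards [ae_lt_top hGm hfin] with ω hω
    simpa using ENNReal.toReal_mono hω.ne (hEG ω)
  · rw [integral_toReal hGm.aemeasurable (ae_lt_top hGm hfin)]
    exact ENNReal.toReal_le_of_le_ofReal (by positivity) hle

lemma integral_le_add_of_le_add_sum_sq {Ω : Type*} [MeasurableSpace Ω] {μ : Measure Ω}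
    [IsProbabilityMeasure μ] {f : Ω → ℝ} {r B : ℝ} {K : ℕ} {w : ℕ → ℝ} {E : ℕ → Ω → ℕ}
    (hf : ∀ ω, 0 ≤ f ω) (hw : ∀ k, 0 ≤ w k)
    (hE : ∀ k, ∃ G : Ω → ℝ, Integrable G μ ∧ (∀ᵐ ω ∂μ, (E k ω : ℝ) ^ 2 ≤ G ω) ∧
      ∫ ω, G ω ∂μ ≤ B)
    (hle : ∀ ω, f ω ≤ r + ∑ k ∈ Finset.range K, w k * (E k ω : ℝ) ^ 2) :
    ∫ ω, f ω ∂μ ≤ r + B * ∑ k ∈ Finset.range K, w k := by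
  choose G hGint hGle hGB using hE
  have hint : Integrable (fun ω => r + ∑ k ∈ Finset.range K, w k * G k ω) μ :=
    (integrable_const r).add (integrable_finsetSum _ fun k _ => (hGint k).const_mul (w k))
  calc ∫ ω, f ω ∂μ ≤ ∫ ω, r + ∑ k ∈ Finset.range K, w k * G k ω ∂μ := by
        refine integral_mono_of_nonneg (ae_of_all _ hf) hint ?_
        filter_upwards [ae_all_iff.2 hGle] with ω hω
        exact (hle ω).trans (by gcongr with k; exacts [hw k, hω k])
    _ = r + ∑ k ∈ Finset.range K, w k * ∫ ω, G k ω ∂μ := by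
        rw [integral_add (integrable_const r)
          (integrable_finsetSum _ fun k _ => (hGint k).const_mul (w k)),
          integral_finsetSum _ fun k _ => (hGint k).const_mul (w k)]
        simp [MeasureTheory.integral_const_mul]
    _ ≤ r + ∑ k ∈ Finset.range K, w k * B :=
        add_le_add_right (Finset.sum_le_sum fun k _ => mul_le_mul_of_nonneg_left (hGB k) (hw k)) r
    _ = r + B * ∑ k ∈ Finset.range K, w k := by rw [Finset.mul_sum]; simp_rw [mul_comm]

lemma IsPoissonProcess.exists_integrable_sq_window_le {Ω : Type*} [MeasurableSpace Ω]
    {Pr : Measure Ω} {N : ℝ → Ω → ℕ} (hN : IsPoissonProcess Pr N) (t : ℝ) (k : ℕ) :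
    ∃ G : Ω → ℝ, Integrable G Pr ∧
      (∀ᵐ ω ∂Pr, ((N (max (t - k) 0) ω - N (max (t - k - 1) 0) ω : ℕ) : ℝ) ^ 2 ≤ G ω) ∧
      ∫ ω, G ω ∂Pr ≤ 2 * exp 1 := by
  have hle : max (t - k - 1) 0 ≤ max (t - k) 0 := max_le_max_right 0 (by linarith)
  have hlen : max (t - k) 0 - max (t - k - 1) 0 ≤ 1 := by
    rcases le_total (t - k - 1) 0 with h | h
    · rw [max_eq_right h, sub_zero]; exact max_le (by linarith) zero_le_one
    · rw [max_eq_left h, max_eq_left (by linarith)]; linarith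
  obtain ⟨G, hG, hGle, hGint⟩ := exists_integrable_sq_le_of_poisson (sub_nonneg.2 hle)
    (hN.2.2.1 _ _ (le_max_right _ 0) hle)
  exact ⟨G, hG, hGle, hGint.trans (by gcongr)⟩

theorem IsPoissonProcess.integral_sq_le_of_abs_le_jumpBound {Ω : Type*} [MeasurableSpace Ω]
    {Pr : Measure Ω} [IsProbabilityMeasure Pr] {N : ℝ → Ω → ℕ} (hN : IsPoissonProcess Pr N)
    {a c M x t : ℝ} (ha : 0 < a) (hc : 0 ≤ c) (hM : 0 ≤ M) (ht : 0 ≤ t) {f : Ω → ℝ}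
    (hf : ∀ ω, |f ω| ≤ jumpBound a c M x {s | leftLim (fun u => N u ω) s ≠ N s ω} t) :
    ∫ ω, f ω ^ 2 ∂Pr ≤ 3 * exp (-a * t) * |x - c| ^ 2 + 27 * c ^ 2 +
      2 * exp 1 * (3 * (3 * c + M) ^ 2 * (1 - exp (-a))⁻¹ ^ 2) := by
  have hρ : exp (-a) < 1 := exp_lt_one_iff.2 (neg_lt_zero.2 ha)
  have hβ : 0 ≤ 3 * (3 * c + M) ^ 2 * (1 - exp (-a))⁻¹ := by have := sub_pos.2 hρ; positivity
  have hJ := fun ω {u v : ℝ} (hu : 0 ≤ u) =>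
    (hN.2.1 ω).finite_jumps_inter_Ioc_and_ncard_le hu (v := v)
  refine (integral_le_add_of_le_add_sum_sq (B := 2 * exp 1)
    (w := fun k => 3 * (3 * c + M) ^ 2 * (1 - exp (-a))⁻¹ * exp (-a) ^ k)
    (fun ω => sq_nonneg _) (fun k => by positivity) (hN.exists_integrable_sq_window_le t)
    fun ω => (sq_abs (f ω) ▸ pow_le_pow_left₀ (abs_nonneg _) (hf ω) 2).trans <|
      sq_jumpBound_le ha hc hM ht (hJ ω le_rfl).1 _ fun k => (hJ ω (le_max_right _ 0)).2).trans ?_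
  rw [← Finset.mul_sum]
  gcongr _ + _ * ?_
  rw [sq ((1 - exp (-a))⁻¹), ← mul_assoc]
  exact mul_le_mul_of_nonneg_left (sum_range_pow_le_inv_one_sub (exp_pos (-a)).le hρ _) hβ

theorem stmt13_general {Ω : Type*} [MeasurableSpace Ω] (Pr : Measure Ω) [IsProbabilityMeasure Pr]
    (N : ℝ → Ω → ℕ) (hN : IsPoissonProcess Pr N)
    (a b m M : ℝ) (ha : 0 < a) (hb : 0 < b) (hm : 0 < m)
    (σ : ℝ → ℝ) (hσl : ∀ x, m < σ x) (hσu : ∀ x, σ x < M)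
    (X : ℝ → ℝ → Ω → ℝ)
    (hSDE : ∀ (x : ℝ) (ω : Ω) (t : ℝ), 0 ≤ t →
      X x t ω = x + (∫ s in (0:ℝ)..t, (a * X x s ω - b * (X x s ω) ^ 3)) +
        ∑ᶠ s ∈ {s : ℝ | 0 < s ∧ s ≤ t ∧ Function.leftLim (fun u => N u ω) s ≠ N s ω},
          σ (Function.leftLim (fun u => X x u ω) s)) :
    ∃ γ > (0:ℝ), ∃ C > (0:ℝ), ∀ (x : ℝ) (t : ℝ), 0 ≤ t →
      ∫ ω, |X x t ω - Real.sqrt (a / b)| ^ 2 ∂Pr ≤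
        C * |x - Real.sqrt (a / b)| ^ 2 * Real.exp (-γ * t) + C := by
  set c := √(a / b)
  have hc : 0 ≤ c := sqrt_nonneg _
  have hbc : b * c ^ 2 = a := by rw [sq_sqrt (div_pos ha hb).le]; field_simp
  have hσ : ∀ s, |σ s| ≤ M := fun s => abs_le.2 ⟨by linarith [hσl s, hσu s], (hσu s).le⟩
  have hM : 0 ≤ M := (abs_nonneg _).trans (hσ 0)
  set D := 27 * c ^ 2 + 2 * exp 1 * (3 * (3 * c + M) ^ 2 * (1 - exp (-a))⁻¹ ^ 2)
  have hD : 0 ≤ D := by positivity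
  refine ⟨a, ha, 3 + D, by positivity, fun x t ht => ?_⟩
  set J : Ω → Set ℝ := fun ω => {s | leftLim (fun u => N u ω) s ≠ N s ω}
  have hpath : ∀ ω, |X x t ω - c| ≤ jumpBound a c M x (J ω) t := fun ω => by
    refine SolvesCubicJumpEq.abs_sub_le_jumpBound (g := fun u => X x u ω)
      (ς := fun s => σ (leftLim (fun u => X x u ω) s)) (fun t ht => ?_) ha.le hb.le hc hbc
      (fun _ => hσ _) (fun t => ((hN.2.1 ω).finite_jumps_inter_Ioc_and_ncard_le le_rfl).1) ht
    have hJ : {s | 0 < s ∧ s ≤ t ∧ leftLim (fun u => N u ω) s ≠ N s ω} = J ω ∩ Ioc 0 t := by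
      ext s; simp only [J, mem_ofPred_eq, mem_inter_iff, mem_Ioc]; tauto
    beta_reduce
    rw [hSDE x ω t ht, hJ]
  have h := hN.integral_sq_le_of_abs_le_jumpBound ha hc hM ht hpath
  simp only [sq_abs] at h ⊢
  nlinarith [mul_nonneg hD (by positivity : 0 ≤ (x - c) ^ 2 * exp (-a * t))]

theorem stmt13 {Ω : Type*} [MeasurableSpace Ω] (Pr : Measure Ω) [IsProbabilityMeasure Pr]
    (N : ℝ → Ω → ℕ) (hN : IsPoissonProcess Pr N)
    (a b m M Lσ : ℝ) (ha : 0 < a) (hb : 0 < b) (hm : 0 < m) (hmM : m < M)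
    (σ : ℝ → ℝ) (hσl : ∀ x, m < σ x) (hσu : ∀ x, σ x < M)
    (hσLip : ∀ x y, |σ x - σ y| ≤ Lσ * |x - y|)
    (X : ℝ → ℝ → Ω → ℝ)
    (hXmeas : ∀ x t, Measurable (X x t))
    (hSDE : ∀ (x : ℝ) (ω : Ω) (t : ℝ), 0 ≤ t →
      X x t ω = x + (∫ s in (0:ℝ)..t, (a * X x s ω - b * (X x s ω) ^ 3)) +
        ∑ᶠ s ∈ {s : ℝ | 0 < s ∧ s ≤ t ∧ Function.leftLim (fun u => N u ω) s ≠ N s ω},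
          σ (Function.leftLim (fun u => X x u ω) s)) :
    ∃ γ > (0:ℝ), ∃ C > (0:ℝ), ∀ (x : ℝ) (t : ℝ), 0 ≤ t →
      ∫ ω, |X x t ω - Real.sqrt (a / b)| ^ 2 ∂Pr ≤
        C * |x - Real.sqrt (a / b)| ^ 2 * Real.exp (-γ * t) + C :=
  stmt13_general Pr N hN a b m M ha hb hm σ hσl hσu X hSDE
end

section
/- Let {P_t} be a Markov semigroup on a Polish space E, α ∈ (0,1), and suppose for every probability measure μ there exists t(μ) such that P_t*μ(B(z, δ/2)) > α for all t ≥ t(μ). Then for any x₁, x₂ ∈ E and any k ∈ ℕ there exist times t₁ < ⋯ < t_k and probability measures ν_i^{x_j} supported in the closed ball of radius δ/2 around z, and μ_k^{x_j} on E, such that P*_{t₁+⋯+t_k} δ_{x_j} = α Σ_{i=1}^{k} (1−α)^{i−1} P*_{t_{i+1}+⋯+t_k} ν_i^{x_j} + (1−α)^k μ_k^{x_j} for j = 1,2 (with the convention that the i = k term has no further semigroup applied). -/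
open MeasureTheory Filter Metric Set Topology

/-! A probability measure `m` with `α < m B` splits as `m = α • m[|B] + (1 - α) • μ'` with `μ'` a
probability measure. The time after which the semigroup charges `B` with mass `> α` can be chosen
uniformly for finitely many initial laws, so one runs the semigroup from the remainders `μ'` for a
common (increasing) time and splits again; the semigroup property carries the earlier pieces
`ν_i` forward by the later times. -/

namespace MeasureTheory.Measure
variable {E F : Type*} [MeasurableSpace E] [MeasurableSpace F]

lemma bind_add (μ ν : Measure E) {f : E → Measure F} (hf : Measurable f) :
    (μ + ν).bind f = μ.bind f + ν.bind f := by
  ext s hs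
  simp [bind_apply hs hf.aemeasurable, lintegral_add_measure]

lemma bind_finset_sum {ι : Type*} (s : Finset ι) (μ : ι → Measure E) {f : E → Measure F}
    (hf : Measurable f) : (∑ i ∈ s, μ i).bind f = ∑ i ∈ s, (μ i).bind f :=
  _root_.map_sum (⟨⟨(bind · f), bind_zero_left f⟩, (bind_add · · hf)⟩ : Measure E →+ Measure F) μ s

open ProbabilityTheory in
lemma exists_eq_smul_add_smul_of_lt_measure (m : Measure E) [IsProbabilityMeasure m]
    {B : Set E} (hB : MeasurableSet B) {α : ℝ} (hα : 0 ≤ α) (hαB : α < (m B).toReal) :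
    ∃ ν μ : Measure E, IsProbabilityMeasure ν ∧ ν Bᶜ = 0 ∧ IsProbabilityMeasure μ ∧
      m = ENNReal.ofReal α • ν + ENNReal.ofReal (1 - α) • μ := by
  set a := ENNReal.ofReal α
  have ha : a < m B := (ENNReal.ofReal_lt_iff_lt_toReal hα (measure_ne_top m B)).2 hαB
  have ha1 : a < 1 := ha.trans_le prob_le_one
  have hmB : m B ≠ 0 := (ha.trans_le' zero_le).ne'
  have : IsProbabilityMeasure m[|B] := cond_isProbabilityMeasure hmB
  have hle : a • m[|B] ≤ m := by
    refine Measure.le_iff'.2 fun u => ?_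
    calc (a • m[|B]) u = a / m B * m (B ∩ u) := by
          rw [smul_apply, cond_apply hB, smul_eq_mul, ENNReal.div_eq_inv_mul]
          ring
      _ ≤ 1 * m u := by
          gcongr
          · exact ENNReal.div_le_of_le_mul (by simpa using ha.le)
          · exact inter_subset_right
      _ = m u := one_mul _
  have : IsFiniteMeasure (a • m[|B]) := isFiniteMeasure_of_le m hle
  have hc : ENNReal.ofReal (1 - α) = 1 - a := by
    rw [ENNReal.ofReal_sub 1 hα, ENNReal.ofReal_one]
  have hc0 : 1 - a ≠ 0 := (tsub_pos_of_lt ha1).ne'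
  refine ⟨m[|B], (1 - a)⁻¹ • (m - a • m[|B]), inferInstance, ae_cond_mem hB, ⟨?_⟩, ?_⟩
  · rw [smul_apply, sub_apply .univ hle, smul_apply, measure_univ, measure_univ, smul_eq_mul,
      smul_eq_mul, mul_one, ENNReal.inv_mul_cancel hc0 (by simp)]
  · rw [hc, smul_smul, ENNReal.mul_inv_cancel hc0 (by simp), one_smul, add_comm,
      sub_add_cancel_of_le hle]

end MeasureTheory.Measure

namespace Fin

lemma strictMono_snoc {α : Type*} [Preorder α] {n : ℕ} {t : Fin n → α} {s : α}
    (ht : StrictMono t) (hs : ∀ i, t i < s) : StrictMono (snoc t s : Fin (n + 1) → α) := by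
  rw [← insertNth_last', strictMono_insertNth_iff]
  exact ⟨ht, fun i _ => hs i, fun i hi => absurd hi (castSucc_lt_last i).not_ge⟩

lemma sum_filter_castSucc_lt_snoc {M : Type*} [AddCommMonoid M] {n : ℕ} (t : Fin n → M) (s : M)
    (i : Fin n) :
    ∑ l ∈ Finset.univ.filter (fun l => i.castSucc < l), (snoc t s : Fin (n + 1) → M) l =
      ∑ l ∈ Finset.univ.filter (fun l => i < l), t l + s := by
  simp [Finset.sum_filter, sum_univ_castSucc, castSucc_lt_last]

lemma filter_last_lt_eq_empty (n : ℕ) :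
    Finset.univ.filter (fun l : Fin (n + 1) => last n < l) = ∅ :=
  Finset.filter_eq_empty_iff.2 fun l _ => (le_last l).not_gt

end Fin

section MarkovSemigroup

variable {E : Type*} [MeasurableSpace E]

structure IsMarkovSemigroup (P : ℝ → E → Measure E) : Prop where
  isProbabilityMeasure : ∀ t x, IsProbabilityMeasure (P t x)
  measurable : ∀ t, Measurable (P t)
  zero : ∀ x, P 0 x = Measure.dirac x
  add : ∀ s t : ℝ, 0 ≤ s → 0 ≤ t → ∀ x, P (s + t) x = (P s x).bind (P t)

def MassEventuallyExceeds (P : ℝ → E → Measure E) (B : Set E) (α : ℝ) : Prop :=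
  ∀ μ : Measure E, IsProbabilityMeasure μ → ∃ tμ : ℝ, ∀ t ≥ tμ, α < (μ.bind (P t) B).toReal

namespace IsMarkovSemigroup
variable {P : ℝ → E → Measure E}

lemma bind_zero (hP : IsMarkovSemigroup P) (μ : Measure E) : μ.bind (P 0) = μ := by
  rw [funext hP.zero, Measure.bind_dirac]

lemma bind_add_time (hP : IsMarkovSemigroup P) (μ : Measure E) {s t : ℝ} (hs : 0 ≤ s)
    (ht : 0 ≤ t) : μ.bind (P (s + t)) = (μ.bind (P s)).bind (P t) := by
  rw [Measure.bind_bind (hP.measurable s).aemeasurable (hP.measurable t).aemeasurable]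
  exact congrArg _ (funext (hP.add s t hs ht))

lemma bind_snoc_eq (hP : IsMarkovSemigroup P) {α : ℝ} (hα1 : α ≤ 1) {k : ℕ} {t : Fin k → ℝ}
    (ht : ∀ i, 0 ≤ t i) {s : ℝ} (hs : 0 ≤ s) {m μ ν' μ' : Measure E} {ν : Fin k → Measure E}
    (heq : m.bind (P (∑ i, t i)) =
      ∑ i : Fin k, ENNReal.ofReal (α * (1 - α) ^ (i : ℕ)) •
        (ν i).bind (P (∑ l ∈ Finset.univ.filter (fun l => i < l), t l)) +
      ENNReal.ofReal ((1 - α) ^ k) • μ)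
    (hdec : μ.bind (P s) = ENNReal.ofReal α • ν' + ENNReal.ofReal (1 - α) • μ') :
    m.bind (P (∑ i, (Fin.snoc t s : Fin (k + 1) → ℝ) i)) =
      ∑ i : Fin (k + 1), ENNReal.ofReal (α * (1 - α) ^ (i : ℕ)) •
        ((Fin.snoc ν ν' : Fin (k + 1) → Measure E) i).bind
          (P (∑ l ∈ Finset.univ.filter (fun l => i < l),
            (Fin.snoc t s : Fin (k + 1) → ℝ) l)) +
      ENNReal.ofReal ((1 - α) ^ (k + 1)) • μ' := by
  have htail : ∀ i : Fin k, 0 ≤ ∑ l ∈ Finset.univ.filter (fun l => i < l), t l :=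
    fun i => Finset.sum_nonneg fun l _ => ht l
  have hpow : 0 ≤ (1 - α) ^ k := pow_nonneg (by linarith) k
  calc m.bind (P (∑ i, (Fin.snoc t s : Fin (k + 1) → ℝ) i))
      = (m.bind (P (∑ i, t i))).bind (P s) := by
        rw [Fin.sum_snoc, hP.bind_add_time m (Finset.sum_nonneg fun i _ => ht i) hs]
    _ = ∑ i : Fin k, ENNReal.ofReal (α * (1 - α) ^ (i : ℕ)) •
          (ν i).bind (P (∑ l ∈ Finset.univ.filter (fun l => i < l), t l + s)) +
        ENNReal.ofReal ((1 - α) ^ k) • μ.bind (P s) := by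
        simp only [heq, Measure.bind_add _ _ (hP.measurable s),
          Measure.bind_finset_sum _ _ (hP.measurable s), Measure.bind_smul,
          hP.bind_add_time _ (htail _) hs]
    _ = _ := by
        rw [hdec, smul_add, smul_smul, smul_smul, ← ENNReal.ofReal_mul hpow,
          ← ENNReal.ofReal_mul hpow, Fin.sum_univ_castSucc, add_assoc]
        simp only [Fin.snoc_castSucc, Fin.snoc_last, Fin.val_castSucc, Fin.val_last,
          Fin.sum_filter_castSucc_lt_snoc, Fin.filter_last_lt_eq_empty, Finset.sum_empty,
          hP.bind_zero, mul_comm ((1 - α) ^ k), pow_succ]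

lemma exists_decomposition (hP : IsMarkovSemigroup P) {B : Set E} (hB : MeasurableSet B)
    {α : ℝ} (hα : 0 ≤ α) (h : MassEventuallyExceeds P B α) {ι : Type*} [Finite ι]
    (μ : ι → Measure E) [∀ j, IsProbabilityMeasure (μ j)] (t₀ : ℝ) :
    ∃ s, t₀ < s ∧ ∃ ν μ' : ι → Measure E, (∀ j, IsProbabilityMeasure (ν j)) ∧
      (∀ j, ν j Bᶜ = 0) ∧ (∀ j, IsProbabilityMeasure (μ' j)) ∧
      ∀ j, (μ j).bind (P s) = ENNReal.ofReal α • ν j + ENNReal.ofReal (1 - α) • μ' j := by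
  obtain ⟨s, hs, hαs⟩ : ∃ s, t₀ < s ∧ ∀ j, α < ((μ j).bind (P s) B).toReal :=
    ((eventually_gt_atTop t₀).and
      (eventually_all.2 fun j => eventually_atTop.2 (h (μ j) inferInstance))).exists
  have hprob : ∀ j, IsProbabilityMeasure ((μ j).bind (P s)) := fun j =>
    isProbabilityMeasure_bind (hP.measurable s).aemeasurable
      (ae_of_all _ (hP.isProbabilityMeasure s))
  choose ν μ' hν hνB hμ' hdec using fun j =>
    ((μ j).bind (P s)).exists_eq_smul_add_smul_of_lt_measure hB hα (hαs j)
  exact ⟨s, hs, ν, μ', hν, hνB, hμ', hdec⟩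

theorem exists_iterated_decomposition (hP : IsMarkovSemigroup P) {B : Set E}
    (hB : MeasurableSet B) {α : ℝ} (hα : 0 ≤ α) (hα1 : α ≤ 1) (h : MassEventuallyExceeds P B α)
    {ι : Type*} [Finite ι] (μ : ι → Measure E) [∀ j, IsProbabilityMeasure (μ j)] (k : ℕ) :
    ∃ t : Fin k → ℝ, (∀ i, 0 < t i) ∧ StrictMono t ∧
      ∃ (ν : ι → Fin k → Measure E) (μk : ι → Measure E),
        (∀ j i, IsProbabilityMeasure (ν j i)) ∧ (∀ j i, ν j i Bᶜ = 0) ∧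
        (∀ j, IsProbabilityMeasure (μk j)) ∧
        ∀ j, (μ j).bind (P (∑ i, t i)) =
          ∑ i : Fin k, ENNReal.ofReal (α * (1 - α) ^ (i : ℕ)) •
            (ν j i).bind (P (∑ l ∈ Finset.univ.filter (fun l => i < l), t l)) +
          ENNReal.ofReal ((1 - α) ^ k) • μk j := by
  induction k with
  | zero =>
    refine ⟨Fin.elim0, (·.elim0), (·.elim0), fun _ => Fin.elim0, μ, fun _ i => i.elim0,
      fun _ i => i.elim0, inferInstance, fun j => ?_⟩
    simp [hP.bind_zero]
  | succ k ih =>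
    obtain ⟨t, ht, htmono, ν, μk, hν, hνB, hμk, heq⟩ := ih
    obtain ⟨M, hM⟩ := (Set.finite_range t).bddAbove
    obtain ⟨s, hs, ν', μ', hν', hν'B, hμ', hdec⟩ := hP.exists_decomposition hB hα h μk (max M 0)
    have htM : ∀ i, t i < s := fun i =>
      (hM (mem_range_self i)).trans_lt ((le_max_left _ _).trans_lt hs)
    have hs₀ : 0 < s := (le_max_right M 0).trans_lt hs
    refine ⟨Fin.snoc t s, Fin.lastCases (by simpa using hs₀) (by simpa using ht),
      Fin.strictMono_snoc htmono htM, fun j => Fin.snoc (ν j) (ν' j), μ',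
      fun j => Fin.lastCases (by simpa using hν' j) (by simpa using hν j),
      fun j => Fin.lastCases (by simpa using hν'B j) (by simpa using hνB j), hμ',
      fun j => hP.bind_snoc_eq hα1 (fun i => (ht i).le) hs₀.le (heq j) (hdec j)⟩

end IsMarkovSemigroup

end MarkovSemigroup

theorem stmt19_general {E : Type*} [MetricSpace E]
    [MeasurableSpace E] [BorelSpace E]
    (P : ℝ → E → Measure E)
    (hprob : ∀ t x, IsProbabilityMeasure (P t x))
    (hmeas : ∀ t, Measurable (P t))
    (hP0 : ∀ x, P 0 x = Measure.dirac x)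
    (hsemi : ∀ s t : ℝ, 0 ≤ s → 0 ≤ t → ∀ x, P (s + t) x = (P s x).bind (P t))
    (z : E) (δ α : ℝ) (hα : 0 < α) (hα1 : α < 1)
    (h : ∀ μ : Measure E, IsProbabilityMeasure μ →
      ∃ tμ : ℝ, ∀ t ≥ tμ, α < (μ.bind (P t) (ball z (δ/2))).toReal) :
    ∀ (x : Fin 2 → E) (k : ℕ), 0 < k →
      ∃ t : Fin k → ℝ, (∀ i, 0 < t i) ∧ StrictMono t ∧
      ∃ (ν : Fin k → Fin 2 → Measure E) (μk : Fin 2 → Measure E),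
        (∀ i j, IsProbabilityMeasure (ν i j)) ∧
        (∀ i j, ν i j (closedBall z (δ/2))ᶜ = 0) ∧
        (∀ j, IsProbabilityMeasure (μk j)) ∧
        (∀ j, Measure.bind (Measure.dirac (x j)) (P (∑ i, t i)) =
          (∑ i : Fin k, ENNReal.ofReal (α * (1 - α) ^ (i : ℕ)) •
            ((ν i j).bind (P (∑ l ∈ Finset.univ.filter (fun l : Fin k => i < l), t l)))) +
          ENNReal.ofReal ((1 - α) ^ k) • μk j) := by
  intro x k _
  obtain ⟨t, ht, htmono, ν, μk, hν, hνB, hμk, heq⟩ :=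
    IsMarkovSemigroup.exists_iterated_decomposition ⟨hprob, hmeas, hP0, hsemi⟩ measurableSet_ball
      hα.le hα1.le h (fun j => Measure.dirac (x j)) k
  exact ⟨t, ht, htmono, fun i j => ν j i, μk, fun i j => hν j i,
    fun i j => measure_mono_null (compl_subset_compl.2 ball_subset_closedBall) (hνB j i), hμk, heq⟩

theorem stmt19 {E : Type*} [MetricSpace E] [CompleteSpace E] [SecondCountableTopology E]
    [MeasurableSpace E] [BorelSpace E]
    (P : ℝ → E → Measure E)
    (hprob : ∀ t x, IsProbabilityMeasure (P t x))
    (hmeas : ∀ t, Measurable (P t))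
    (hP0 : ∀ x, P 0 x = Measure.dirac x)
    (hsemi : ∀ s t : ℝ, 0 ≤ s → 0 ≤ t → ∀ x, P (s + t) x = (P s x).bind (P t))
    (z : E) (δ α : ℝ) (hδ : 0 < δ) (hα : 0 < α) (hα1 : α < 1)
    (h : ∀ μ : Measure E, IsProbabilityMeasure μ →
      ∃ tμ : ℝ, ∀ t ≥ tμ, α < (μ.bind (P t) (ball z (δ/2))).toReal) :
    ∀ (x : Fin 2 → E) (k : ℕ), 0 < k →
      ∃ t : Fin k → ℝ, (∀ i, 0 < t i) ∧ StrictMono t ∧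
      ∃ (ν : Fin k → Fin 2 → Measure E) (μk : Fin 2 → Measure E),
        (∀ i j, IsProbabilityMeasure (ν i j)) ∧
        (∀ i j, ν i j (closedBall z (δ/2))ᶜ = 0) ∧
        (∀ j, IsProbabilityMeasure (μk j)) ∧
        (∀ j, Measure.bind (Measure.dirac (x j)) (P (∑ i, t i)) =
          (∑ i : Fin k, ENNReal.ofReal (α * (1 - α) ^ (i : ℕ)) •
            ((ν i j).bind (P (∑ l ∈ Finset.univ.filter (fun l : Fin k => i < l), t l)))) +
          ENNReal.ofReal ((1 - α) ^ k) • μk j) :=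
  stmt19_general P hprob hmeas hP0 hsemi z δ α hα hα1 h
end
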